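/- arXiv:2211.03351 — 9 statements merged into one kernel-verified Lean document; each statement's English description precedes it below -/
import Mathlib

section
/- Let ω be a radial weight on [0,1) (a non-negative integrable function) with tail integral ω̂(r) = ∫_r^1 ω(s) ds. If ω satisfies the doubling condition ω̂(r) ≤ C ω̂((1+r)/2) for all 0 ≤ r < 1 and some constant C ≥ 1, then there exist constants C' > 0 and β > 0 such that ω̂(r) ≤ C' ((1-r)/(1-t))^β ω̂(t) for all 0 ≤ r ≤ t < 1. -/
/-!
Iterating the doubling inequality `ω̂(r) ≤ C ω̂((1+r)/2)` halves the distance to `1` at the cost of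
a factor `C` per step, so `ω̂(r) ≤ Cⁿ ω̂(1 - (1-r)/2ⁿ)`. Choosing `n` with `2ⁿ ≈ (1-r)/(1-t)` and
using that `ω̂` is decreasing gives the claim with `β = log₂ C`, after enlarging `C` to at least `2`
so that `β > 0`.
-/

open MeasureTheory Set

theorem antitoneOn_setIntegral_Ioc {ω : ℝ → ℝ} {a b : ℝ} (hnn : ∀ s, 0 ≤ ω s)
    (hω : IntegrableOn ω (Ioc a b)) :
    AntitoneOn (fun r ↦ ∫ s in Ioc r b, ω s) (Ici a) := by
  intro r hr r' _ hrr'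
  exact setIntegral_mono_set (hω.mono_set (Ioc_subset_Ioc_left hr))
    (Filter.Eventually.of_forall fun s ↦ hnn s) (Ioc_subset_Ioc_left hrr').eventuallyLE

section Doubling

variable {W : ℝ → ℝ} {C : ℝ}

theorem le_pow_mul_of_doubling (hC : 0 ≤ C)
    (hD : ∀ r ∈ Ico (0 : ℝ) 1, W r ≤ C * W ((1 + r) / 2)) (n : ℕ) :
    ∀ r ∈ Ico (0 : ℝ) 1, W r ≤ C ^ n * W (1 - (1 - r) / 2 ^ n) := by
  induction n with
  | zero => simp
  | succ n ih =>
    intro r ⟨hr0, hr1⟩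
    have hmid : (1 + r) / 2 ∈ Ico (0 : ℝ) 1 := ⟨by linarith, by linarith⟩
    have hpoint : 1 - (1 - (1 + r) / 2) / 2 ^ n = 1 - (1 - r) / 2 ^ (n + 1) := by
      field_simp
      ring
    calc W r ≤ C * W ((1 + r) / 2) := hD r ⟨hr0, hr1⟩
      _ ≤ C * (C ^ n * W (1 - (1 - (1 + r) / 2) / 2 ^ n)) := by gcongr; exact ih _ hmid
      _ = C ^ (n + 1) * W (1 - (1 - r) / 2 ^ (n + 1)) := by rw [hpoint, pow_succ']; ring

theorem le_pow_mul_of_doubling_of_le (hC : 0 ≤ C) (hanti : AntitoneOn W (Ico 0 1))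
    (hD : ∀ r ∈ Ico (0 : ℝ) 1, W r ≤ C * W ((1 + r) / 2)) {r t : ℝ} (hr : 0 ≤ r) (hrt : r ≤ t)
    (ht : t < 1) {n : ℕ} (hn : 1 - r ≤ 2 ^ n * (1 - t)) :
    W r ≤ C ^ n * W t := by
  have h2n : (0 : ℝ) < 2 ^ n := by positivity
  have hpos : 0 < (1 - r) / 2 ^ n := div_pos (by linarith) h2n
  have hle : (1 - r) / 2 ^ n ≤ 1 - t := by rwa [div_le_iff₀ h2n, mul_comm]
  calc W r ≤ C ^ n * W (1 - (1 - r) / 2 ^ n) :=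
        le_pow_mul_of_doubling hC hD n r ⟨hr, hrt.trans_lt ht⟩
    _ ≤ C ^ n * W t := by
        gcongr
        exact hanti ⟨hr.trans hrt, ht⟩ ⟨by linarith, by linarith⟩ (by linarith)

theorem le_mul_rpow_mul_of_doubling {β : ℝ} (hβ : 0 ≤ β) (hanti : AntitoneOn W (Ico 0 1))
    (hnn : ∀ t ∈ Ico (0 : ℝ) 1, 0 ≤ W t)
    (hD : ∀ r ∈ Ico (0 : ℝ) 1, W r ≤ 2 ^ β * W ((1 + r) / 2)) {r t : ℝ} (hr : 0 ≤ r)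
    (hrt : r ≤ t) (ht : t < 1) :
    W r ≤ 2 ^ β * ((1 - r) / (1 - t)) ^ β * W t := by
  set x := (1 - r) / (1 - t)
  have h1t : 0 < 1 - t := by linarith
  have hx : 1 ≤ x := (one_le_div h1t).2 (by linarith)
  obtain ⟨n, hn_le, hlt_n⟩ := exists_nat_pow_near hx one_lt_two
  have hstep : 1 - r ≤ 2 ^ (n + 1) * (1 - t) := ((div_le_iff₀ h1t).1 hlt_n.le)
  have hpow : ((2 : ℝ) ^ β) ^ (n + 1) ≤ 2 ^ β * x ^ β := by
    calc ((2 : ℝ) ^ β) ^ (n + 1) = ((2 : ℝ) ^ (n + 1)) ^ β := by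
          rw [← Real.rpow_natCast, ← Real.rpow_natCast, ← Real.rpow_mul zero_le_two,
            ← Real.rpow_mul zero_le_two, mul_comm]
      _ ≤ (2 * x) ^ β := by gcongr; rw [pow_succ']; gcongr
      _ = 2 ^ β * x ^ β := Real.mul_rpow zero_le_two (by linarith)
  calc W r ≤ ((2 : ℝ) ^ β) ^ (n + 1) * W t :=
        le_pow_mul_of_doubling_of_le (by positivity) hanti hD hr hrt ht hstep
    _ ≤ 2 ^ β * x ^ β * W t := by gcongr; exact hnn t ⟨hr.trans hrt, ht⟩

end Doubling

theorem stmt_0_general (ω : ℝ → ℝ) (hnn : ∀ r, 0 ≤ ω r)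
    (hInt : IntegrableOn ω (Set.Ico (0:ℝ) 1))
    (What : ℝ → ℝ) (hWhat : ∀ r, What r = ∫ s in Set.Ioc r 1, ω s)
    (hD : ∃ C ≥ (1:ℝ), ∀ r ∈ Set.Ico (0:ℝ) 1, What r ≤ C * What ((1 + r) / 2)) :
    ∃ C' > (0:ℝ), ∃ β > (0:ℝ), ∀ r t : ℝ, 0 ≤ r → r ≤ t → t < 1 →
      What r ≤ C' * ((1 - r) / (1 - t)) ^ β * What t := by
  obtain rfl : What = fun r ↦ ∫ s in Ioc r 1, ω s := funext hWhat
  obtain ⟨C, -, hC⟩ := hD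
  have hnnW : ∀ r, 0 ≤ ∫ s in Ioc r 1, ω s :=
    fun r ↦ setIntegral_nonneg measurableSet_Ioc fun s _ ↦ hnn s
  have hanti : AntitoneOn (fun r ↦ ∫ s in Ioc r 1, ω s) (Ico 0 1) :=
    (antitoneOn_setIntegral_Ioc hnn ((integrableOn_Ioc_iff_integrableOn_Ioo).mpr
      ((integrableOn_Ico_iff_integrableOn_Ioo).mp hInt))).mono Ico_subset_Ici_self
  set β := Real.logb 2 (max C 2)
  have h2β : (2 : ℝ) ^ β = max C 2 := Real.rpow_logb two_pos (by norm_num) (by positivity)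
  have hβ : 0 < β := Real.logb_pos one_lt_two (by simp)
  refine ⟨2 ^ β, by positivity, β, hβ, fun r t hr hrt ht ↦ ?_⟩
  refine le_mul_rpow_mul_of_doubling hβ.le hanti (fun t _ ↦ hnnW t) (fun r hr ↦ ?_) hr hrt ht
  rw [h2β]
  exact (hC r hr).trans (mul_le_mul_of_nonneg_right (le_max_left C 2) (hnnW _))

/-- If a radial weight ω satisfies the doubling condition
ω̂(r) ≤ C ω̂((1+r)/2), then ω̂(r) ≤ C' ((1-r)/(1-t))^β ω̂(t) for 0 ≤ r ≤ t < 1. -/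
theorem stmt_0 (ω : ℝ → ℝ) (hnn : ∀ r, 0 ≤ ω r)
    (hInt : IntegrableOn ω (Set.Ico (0:ℝ) 1))
    (What : ℝ → ℝ) (hWhat : ∀ r, What r = ∫ s in Set.Ioc r 1, ω s)
    (hpos : ∀ r ∈ Set.Ico (0:ℝ) 1, 0 < What r)
    (hD : ∃ C ≥ (1:ℝ), ∀ r ∈ Set.Ico (0:ℝ) 1, What r ≤ C * What ((1 + r) / 2)) :
    ∃ C' > (0:ℝ), ∃ β > (0:ℝ), ∀ r t : ℝ, 0 ≤ r → r ≤ t → t < 1 →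
      What r ≤ C' * ((1 - r) / (1 - t)) ^ β * What t :=
  stmt_0_general ω hnn hInt What hWhat hD
end

section
/- Let ω be a radial weight in D̂. Then there exist constants C ≥ 1 and η > 0 such that ω_x ≤ C (y/x)^η ω_y for all 0 < x ≤ y < ∞, where ω_x = ∫_0^1 s^x ω(s) ds. -/
/-!
By the layer-cake formula, `ω_x = x ∫₀¹ tˣ⁻¹ ω̂(t) dt`, and `ω_{2x}` is the same integral with
`ω̂(t)` replaced by `ω̂(√t) ≥ ω̂((1 + t) / 2) ≥ ω̂(t) / C`. Hence `ω_x ≤ C ω_{2x}`. Iterating this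
doubling inequality along `x, 2x, 4x, …` and using that `x ↦ ω_x` decreases gives
`ω_x ≤ C (y / x)^η ω_y` with `η = log₂ C` (after enlarging `C` to make `η` positive).
-/

open MeasureTheory Set
open scoped ENNReal

theorem lintegral_rpow_le_mul_of_meas_lt_le {α : Type*} [MeasurableSpace α] {μ : Measure α}
    {f g : α → ℝ} {c : ℝ≥0∞} (hc : c ≠ ∞) (hf : 0 ≤ᵐ[μ] f) (hg : 0 ≤ᵐ[μ] g)
    (hfm : AEMeasurable f μ) (hgm : AEMeasurable g μ)
    (h : ∀ t > 0, μ {a | t < f a} ≤ c * μ {a | t < g a}) {p : ℝ} (hp : 0 < p) :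
    ∫⁻ a, ENNReal.ofReal (f a ^ p) ∂μ ≤ c * ∫⁻ a, ENNReal.ofReal (g a ^ p) ∂μ := by
  rw [lintegral_rpow_eq_lintegral_meas_lt_mul μ hf hfm hp,
    lintegral_rpow_eq_lintegral_meas_lt_mul μ hg hgm hp, mul_left_comm,
    ← lintegral_const_mul' _ _ hc]
  gcongr ENNReal.ofReal p * ?_
  refine setLIntegral_mono' measurableSet_Ioi fun t ht => ?_
  rw [← mul_assoc]
  gcongr
  exact h t ht

theorem pow_le_mul_rpow_logb {K t : ℝ} {n : ℕ} (hK : 1 ≤ K) (ht : 0 < t)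
    (hn : (n : ℝ) < Real.logb 2 t + 1) : K ^ n ≤ K * t ^ Real.logb 2 K := by
  have hK0 : 0 < K := by linarith
  have hswap : K ^ Real.logb 2 t = t ^ Real.logb 2 K := by
    rw [Real.rpow_def_of_pos hK0, Real.rpow_def_of_pos ht, Real.logb, Real.logb]
    ring_nf
  calc K ^ n = K ^ (n : ℝ) := (Real.rpow_natCast K n).symm
    _ ≤ K ^ (Real.logb 2 t + 1) := Real.rpow_le_rpow_of_exponent_le hK hn.le
    _ = K * t ^ Real.logb 2 K := by rw [Real.rpow_add_one hK0.ne', hswap, mul_comm]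

theorem le_mul_rpow_logb_mul_of_le_mul_two {F : ℝ → ℝ} {K : ℝ} (hK : 1 ≤ K)
    (hF : ∀ x, 0 < x → 0 ≤ F x) (hanti : AntitoneOn F (Ioi 0))
    (hdbl : ∀ x, 0 < x → F x ≤ K * F (2 * x)) {x y : ℝ} (hx : 0 < x) (hxy : x ≤ y) :
    F x ≤ K * (y / x) ^ Real.logb 2 K * F y := by
  have hiter : ∀ n : ℕ, F x ≤ K ^ n * F (2 ^ n * x) := by
    intro n
    induction n with
    | zero => simp
    | succ n ih =>
      calc F x ≤ K ^ n * F (2 ^ n * x) := ih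
        _ ≤ K ^ n * (K * F (2 * (2 ^ n * x))) := by gcongr; exact hdbl _ (by positivity)
        _ = K ^ (n + 1) * F (2 ^ (n + 1) * x) := by ring_nf
  have hy : 0 < y := hx.trans_le hxy
  have ht : 1 ≤ y / x := (one_le_div hx).mpr hxy
  set n := ⌈Real.logb 2 (y / x)⌉₊
  have hyn : y ≤ 2 ^ n * x := by
    rw [← div_le_iff₀ hx, ← Real.rpow_natCast]
    exact (Real.logb_le_iff_le_rpow one_lt_two (by positivity)).mp (Nat.le_ceil _)
  calc F x ≤ K ^ n * F (2 ^ n * x) := hiter n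
    _ ≤ K ^ n * F y := by
      gcongr
      exact hanti hy (by simp only [mem_Ioi]; positivity) hyn
    _ ≤ K * (y / x) ^ Real.logb 2 K * F y := by
      gcongr
      · exact hF y hy
      · exact pow_le_mul_rpow_logb hK (by positivity)
          (Nat.ceil_lt_add_one (Real.logb_nonneg one_lt_two ht))

noncomputable def weightMeasure (ω : ℝ → ℝ) : Measure ℝ :=
  (volume.restrict (Ioc 0 1)).withDensity fun s => ENNReal.ofReal (ω s)

noncomputable def weightMoment (ω : ℝ → ℝ) (x : ℝ) : ℝ :=
  ∫ s in Ioc 0 1, s ^ x * ω s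

section

variable {ω : ℝ → ℝ}

theorem ae_mem_Ioc_weightMeasure : ∀ᵐ s ∂weightMeasure ω, s ∈ Ioc (0 : ℝ) 1 :=
  (withDensity_absolutelyContinuous _ _).ae_le (ae_restrict_mem measurableSet_Ioc)

theorem isFiniteMeasure_weightMeasure (hω : IntegrableOn ω (Ioc 0 1)) :
    IsFiniteMeasure (weightMeasure ω) :=
  isFiniteMeasure_withDensity_ofReal hω.hasFiniteIntegral

theorem weightMeasure_Ioi (hω : IntegrableOn ω (Ioc 0 1)) (hnn : ∀ s, 0 ≤ ω s) {t : ℝ}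
    (ht : 0 ≤ t) : weightMeasure ω (Ioi t) = ENNReal.ofReal (∫ s in Ioc t 1, ω s) := by
  rw [weightMeasure, withDensity_apply _ measurableSet_Ioi,
    Measure.restrict_restrict measurableSet_Ioi, inter_comm, Ioc_inter_Ioi, sup_eq_right.mpr ht,
    ofReal_integral_eq_lintegral_ofReal (hω.mono_set (Ioc_subset_Ioc_left ht))
      (ae_of_all _ hnn)]

theorem weightMeasure_Ioi_le_mul_setOf_lt_sq (hω : IntegrableOn ω (Ioc 0 1))
    (hnn : ∀ s, 0 ≤ ω s) {C : ℝ} (hC : 0 ≤ C)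
    (hD : ∀ r ∈ Ico (0 : ℝ) 1, ∫ s in Ioc r 1, ω s ≤ C * ∫ s in Ioc ((1 + r) / 2) 1, ω s)
    {t : ℝ} (ht : 0 < t) :
    weightMeasure ω (Ioi t) ≤ ENNReal.ofReal C * weightMeasure ω {s | t < s ^ 2} := by
  rcases lt_or_ge t 1 with ht1 | ht1
  · calc weightMeasure ω (Ioi t) = ENNReal.ofReal (∫ s in Ioc t 1, ω s) :=
          weightMeasure_Ioi hω hnn ht.le
      _ ≤ ENNReal.ofReal (C * ∫ s in Ioc ((1 + t) / 2) 1, ω s) :=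
          ENNReal.ofReal_le_ofReal (hD t ⟨ht.le, ht1⟩)
      _ = ENNReal.ofReal C * weightMeasure ω (Ioi ((1 + t) / 2)) := by
          rw [ENNReal.ofReal_mul hC, weightMeasure_Ioi hω hnn (by positivity)]
      _ ≤ ENNReal.ofReal C * weightMeasure ω {s | t < s ^ 2} := by
          gcongr
          intro s (hs : (1 + t) / 2 < s)
          calc t ≤ ((1 + t) / 2) ^ 2 := by nlinarith [sq_nonneg (1 - t)]
            _ < s ^ 2 := by gcongr
  · rw [weightMeasure_Ioi hω hnn ht.le, Ioc_eq_empty_of_le ht1]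
    simp

theorem lintegral_rpow_weightMeasure_antitone :
    Antitone fun x : ℝ => ∫⁻ s, ENNReal.ofReal (s ^ x) ∂weightMeasure ω := by
  intro x y hxy
  refine lintegral_mono_ae ?_
  filter_upwards [ae_mem_Ioc_weightMeasure] with s hs
  exact ENNReal.ofReal_le_ofReal (Real.rpow_le_rpow_of_exponent_ge hs.1 hs.2 hxy)

theorem lintegral_rpow_weightMeasure_ne_top (hω : IntegrableOn ω (Ioc 0 1)) {x : ℝ}
    (hx : 0 ≤ x) : ∫⁻ s, ENNReal.ofReal (s ^ x) ∂weightMeasure ω ≠ ∞ := by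
  have := isFiniteMeasure_weightMeasure hω
  refine ne_top_of_le_ne_top ?_ (lintegral_rpow_weightMeasure_antitone hx)
  simp [measure_ne_top]

theorem weightMoment_eq_toReal_lintegral (hω : IntegrableOn ω (Ioc 0 1)) (hnn : ∀ s, 0 ≤ ω s)
    (x : ℝ) :
    weightMoment ω x = (∫⁻ s, ENNReal.ofReal (s ^ x) ∂weightMeasure ω).toReal := by
  rw [weightMoment, ← integral_eq_lintegral_of_nonneg_ae, weightMeasure,
    integral_withDensity_eq_integral_toReal_smul₀ hω.aemeasurable.ennreal_ofReal
      (ae_of_all _ fun _ => ENNReal.ofReal_lt_top)]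
  · simp only [ENNReal.toReal_ofReal (hnn _), smul_eq_mul, mul_comm]
  · filter_upwards [ae_mem_Ioc_weightMeasure] with s hs using Real.rpow_nonneg hs.1.le x
  · exact (measurable_id.pow_const x).aestronglyMeasurable

theorem weightMoment_nonneg (hnn : ∀ s, 0 ≤ ω s) (x : ℝ) : 0 ≤ weightMoment ω x :=
  setIntegral_nonneg measurableSet_Ioc fun s hs => mul_nonneg (Real.rpow_nonneg hs.1.le x) (hnn s)

theorem weightMoment_antitoneOn (hω : IntegrableOn ω (Ioc 0 1)) (hnn : ∀ s, 0 ≤ ω s) :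
    AntitoneOn (weightMoment ω) (Ici 0) := by
  intro x hx y _ hxy
  rw [weightMoment_eq_toReal_lintegral hω hnn, weightMoment_eq_toReal_lintegral hω hnn]
  exact ENNReal.toReal_mono (lintegral_rpow_weightMeasure_ne_top hω hx)
    (lintegral_rpow_weightMeasure_antitone hxy)

theorem weightMoment_le_mul_weightMoment_two_mul (hω : IntegrableOn ω (Ioc 0 1))
    (hnn : ∀ s, 0 ≤ ω s) {C : ℝ} (hC : 0 ≤ C)
    (hD : ∀ r ∈ Ico (0 : ℝ) 1, ∫ s in Ioc r 1, ω s ≤ C * ∫ s in Ioc ((1 + r) / 2) 1, ω s)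
    {x : ℝ} (hx : 0 < x) : weightMoment ω x ≤ C * weightMoment ω (2 * x) := by
  have hnonneg : ∀ᵐ s ∂weightMeasure ω, 0 ≤ s := by
    filter_upwards [ae_mem_Ioc_weightMeasure] with s hs using hs.1.le
  have key := lintegral_rpow_le_mul_of_meas_lt_le ENNReal.ofReal_ne_top hnonneg
    (ae_of_all _ fun s => sq_nonneg s) aemeasurable_id (measurable_id.pow_const 2).aemeasurable
    (fun t ht => weightMeasure_Ioi_le_mul_setOf_lt_sq hω hnn hC hD ht) hx
  have hsq : ∫⁻ s, ENNReal.ofReal ((s ^ 2) ^ x) ∂weightMeasure ω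
      = ∫⁻ s, ENNReal.ofReal (s ^ (2 * x)) ∂weightMeasure ω := by
    refine lintegral_congr_ae ?_
    filter_upwards [hnonneg] with s hs
    rw [← Real.rpow_natCast_mul hs]
    norm_num
  rw [hsq] at key
  rw [weightMoment_eq_toReal_lintegral hω hnn, weightMoment_eq_toReal_lintegral hω hnn,
    ← ENNReal.toReal_ofReal hC, ← ENNReal.toReal_mul]
  exact ENNReal.toReal_mono (ENNReal.mul_ne_top ENNReal.ofReal_ne_top
    (lintegral_rpow_weightMeasure_ne_top hω (by positivity))) key

end

theorem stmt_2_general (ω : ℝ → ℝ) (hnn : ∀ r, 0 ≤ ω r)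
    (hInt : IntegrableOn ω (Set.Ico (0:ℝ) 1))
    (What : ℝ → ℝ) (hWhat : ∀ r, What r = ∫ s in Set.Ioc r 1, ω s)
    (hD : ∃ C ≥ (1:ℝ), ∀ r ∈ Set.Ico (0:ℝ) 1, What r ≤ C * What ((1 + r) / 2))
    (mom : ℝ → ℝ) (hmom : ∀ x, mom x = ∫ s in Set.Ioc (0:ℝ) 1, s ^ x * ω s) :
    ∃ C ≥ (1:ℝ), ∃ η > (0:ℝ), ∀ x y : ℝ, 0 < x → x ≤ y →
      mom x ≤ C * (y / x) ^ η * mom y := by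
  obtain ⟨C, hC, hDC⟩ := hD
  have hω : IntegrableOn ω (Ioc 0 1) :=
    (integrableOn_Ioc_iff_integrableOn_Ioo).2 ((integrableOn_Ico_iff_integrableOn_Ioo).1 hInt)
  simp only [hWhat] at hDC
  obtain rfl : mom = weightMoment ω := funext hmom
  have hK : 1 < max C 2 := lt_max_of_lt_right one_lt_two
  refine ⟨max C 2, hK.le, Real.logb 2 (max C 2), Real.logb_pos one_lt_two hK,
    fun x y hx hxy => le_mul_rpow_logb_mul_of_le_mul_two hK.le
      (fun x _ => weightMoment_nonneg hnn x)
      ((weightMoment_antitoneOn hω hnn).mono Ioi_subset_Ici_self) (fun x hx => ?_) hx hxy⟩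
  calc weightMoment ω x ≤ C * weightMoment ω (2 * x) :=
        weightMoment_le_mul_weightMoment_two_mul hω hnn (by linarith) hDC hx
    _ ≤ max C 2 * weightMoment ω (2 * x) := by
        gcongr
        · exact weightMoment_nonneg hnn _
        · exact le_max_left C 2

/-- For ω ∈ D̂ there exist C ≥ 1 and η > 0 such that ω_x ≤ C (y/x)^η ω_y
for all 0 < x ≤ y. -/
theorem stmt_2 (ω : ℝ → ℝ) (hnn : ∀ r, 0 ≤ ω r)
    (hInt : IntegrableOn ω (Set.Ico (0:ℝ) 1))
    (What : ℝ → ℝ) (hWhat : ∀ r, What r = ∫ s in Set.Ioc r 1, ω s)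
    (hpos : ∀ r ∈ Set.Ico (0:ℝ) 1, 0 < What r)
    (hD : ∃ C ≥ (1:ℝ), ∀ r ∈ Set.Ico (0:ℝ) 1, What r ≤ C * What ((1 + r) / 2))
    (mom : ℝ → ℝ) (hmom : ∀ x, mom x = ∫ s in Set.Ioc (0:ℝ) 1, s ^ x * ω s) :
    ∃ C ≥ (1:ℝ), ∃ η > (0:ℝ), ∀ x y : ℝ, 0 < x → x ≤ y →
      mom x ≤ C * (y / x) ^ η * mom y :=
  stmt_2_general ω hnn hInt What hWhat hD mom hmom
end

section
/- Let ω be a radial weight satisfying the converse condition: there exist constants K > 1 and C > 1 such that ω̂(r) ≥ C ω̂(1 - (1-r)/K) for all 0 ≤ r < 1. Assume also that ω̂(r) ≤ C' ((1-r)/(1-t))^β ω̂(t) for 0 ≤ r ≤ t < 1 (i.e., ω ∈ D̂). Then the moments satisfy ω_{2x} ≍ ω_x for x ≥ 1. -/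
/-!
Cut `(0, 1]` at the points `1 - 2 ^ k / (4x)`. On the `k`-th piece `s ^ x ≤ exp (-2 ^ k / 4)`,
while the `D̂` condition bounds the mass of `ω` beyond the piece by
`(2 ^ (k + 1)) ^ β * ω̂ (1 - 1 / (4x))`; the doubly exponential decay makes the series converge,
so `ω_x ≲ ω̂ (1 - 1 / (4x))`. Conversely, Bernoulli's inequality gives
`(1 - 1 / (4x)) ^ (2x) ≥ 1 / 2`, so `ω̂ (1 - 1 / (4x)) ≤ 2 ω_{2x}`. The bound `ω_{2x} ≤ ω_x` is
monotonicity of `s ^ x` in `x`.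
-/

open MeasureTheory Set Filter Real Asymptotics

namespace RadialWeight

/-- The paper's `ω̂(r)`. -/
noncomputable def tail (ω : ℝ → ℝ) (r : ℝ) : ℝ := ∫ s in Ioc r 1, ω s

/-- The paper's `ω_x`. -/
noncomputable def moment (ω : ℝ → ℝ) (x : ℝ) : ℝ := ∫ s in Ioc 0 1, s ^ x * ω s

lemma setIntegral_Ioc_eq_add_sum {f : ℝ → ℝ} {r : ℕ → ℝ} (hr : Antitone r) (hr0 : r 0 ≤ 1)
    (N : ℕ) (hf : IntegrableOn f (Ioc (r N) 1)) :
    ∫ s in Ioc (r N) 1, f s =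
      (∫ s in Ioc (r 0) 1, f s) + ∑ k ∈ Finset.range N, ∫ s in Ioc (r (k + 1)) (r k), f s := by
  induction N with
  | zero => simp
  | succ N ih =>
    have hsplit : Ioc (r (N + 1)) 1 = Ioc (r (N + 1)) (r N) ∪ Ioc (r N) 1 :=
      (Ioc_union_Ioc_eq_Ioc (hr N.le_succ) ((hr N.zero_le).trans hr0)).symm
    rw [hsplit] at hf ⊢
    rw [setIntegral_union (Ioc_disjoint_Ioc_of_le le_rfl) measurableSet_Ioc
      (hf.mono_set subset_union_left) (hf.mono_set subset_union_right),
      ih (hf.mono_set subset_union_right), Finset.sum_range_succ]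
    ring

lemma summable_exp_neg_mul_two_pow_mul_rpow {c : ℝ} (hc : 0 < c) (β : ℝ) :
    Summable fun k : ℕ => exp (-(c * 2 ^ k)) * ((2 : ℝ) ^ (k + 1)) ^ β := by
  have hu : Tendsto (fun k : ℕ => (2 : ℝ) ^ (k + 1)) atTop atTop :=
    (tendsto_pow_atTop_atTop_of_one_lt one_lt_two).comp (tendsto_add_atTop_nat 1)
  have hbdd := ((tendsto_rpow_mul_exp_neg_mul_atTop_nhds_zero (β + 1) (c / 2)
    (half_pos hc)).comp hu).isBigO_one ℝ
  have hgeom : Summable fun k : ℕ => ((2 : ℝ) ^ (k + 1))⁻¹ := by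
    simpa [inv_pow] using (summable_nat_add_iff 1).mpr summable_geometric_two
  refine summable_of_isBigO_nat hgeom
    ((hbdd.mul (isBigO_refl (fun k : ℕ => ((2 : ℝ) ^ (k + 1))⁻¹) atTop)).congr
      (fun k => ?_) (fun k => one_mul _))
  have h2 : (2 : ℝ) ^ (k + 1) ≠ 0 := by positivity
  simp only [Function.comp_apply]
  rw [rpow_add_one h2, pow_succ]
  field_simp

section
variable {ω : ℝ → ℝ}

lemma integrableOn_rpow_mul {a b x : ℝ} (hω : IntegrableOn ω (Ioc a b)) (ha : 0 ≤ a)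
    (hb : b ≤ 1) (hx : 0 ≤ x) : IntegrableOn (fun s => s ^ x * ω s) (Ioc a b) := by
  refine hω.bdd_mul (c := 1) (by fun_prop) ?_
  filter_upwards [ae_restrict_mem measurableSet_Ioc] with s hs
  rw [norm_of_nonneg (rpow_nonneg (ha.trans hs.1.le) x)]
  exact rpow_le_one (ha.trans hs.1.le) (hs.2.trans hb) hx

lemma tail_nonneg (hnn : ∀ s, 0 ≤ ω s) (r : ℝ) : 0 ≤ tail ω r :=
  setIntegral_nonneg measurableSet_Ioc fun s _ => hnn s

lemma setIntegral_rpow_mul_le {a b x : ℝ} (hnn : ∀ s, 0 ≤ ω s) (hω : IntegrableOn ω (Ioc a 1))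
    (ha : 0 ≤ a) (hab : a ≤ b) (hb : b ≤ 1) (hx : 0 ≤ x) :
    ∫ s in Ioc a b, s ^ x * ω s ≤ b ^ x * tail ω a := by
  have hωab : IntegrableOn ω (Ioc a b) := hω.mono_set (Ioc_subset_Ioc_right hb)
  calc ∫ s in Ioc a b, s ^ x * ω s
      ≤ ∫ s in Ioc a b, b ^ x * ω s :=
        setIntegral_mono_on (integrableOn_rpow_mul hωab ha hb hx) (hωab.const_mul _)
          measurableSet_Ioc fun s hs => mul_le_mul_of_nonneg_right
            (rpow_le_rpow (ha.trans hs.1.le) hs.2 hx) (hnn s)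
    _ = b ^ x * ∫ s in Ioc a b, ω s := integral_const_mul _ _
    _ ≤ b ^ x * tail ω a := by
      gcongr
      · exact rpow_nonneg (ha.trans hab) x
      · exact setIntegral_mono_set hω (.of_forall fun s => hnn s)
          (Ioc_subset_Ioc_right hb).eventuallyLE

lemma rpow_mul_tail_le_moment {a x : ℝ} (hnn : ∀ s, 0 ≤ ω s) (hω : IntegrableOn ω (Ioc 0 1))
    (ha : 0 ≤ a) (hx : 0 ≤ x) : a ^ x * tail ω a ≤ moment ω x := by
  have hsub : Ioc a 1 ⊆ Ioc 0 1 := Ioc_subset_Ioc_left ha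
  have hω' : IntegrableOn ω (Ioc a 1) := hω.mono_set hsub
  calc a ^ x * tail ω a = ∫ s in Ioc a 1, a ^ x * ω s := (integral_const_mul _ _).symm
    _ ≤ ∫ s in Ioc a 1, s ^ x * ω s :=
        setIntegral_mono_on (hω'.const_mul _) (integrableOn_rpow_mul hω' ha le_rfl hx)
          measurableSet_Ioc fun s hs => mul_le_mul_of_nonneg_right
            (rpow_le_rpow ha hs.1.le hx) (hnn s)
    _ ≤ moment ω x :=
        setIntegral_mono_set (integrableOn_rpow_mul hω le_rfl le_rfl hx)
          (by filter_upwards [ae_restrict_mem measurableSet_Ioc] with s hs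
              exact mul_nonneg (rpow_nonneg hs.1.le x) (hnn s))
          hsub.eventuallyLE

lemma moment_le_moment {x y : ℝ} (hnn : ∀ s, 0 ≤ ω s) (hω : IntegrableOn ω (Ioc 0 1))
    (hx : 0 ≤ x) (hxy : x ≤ y) : moment ω y ≤ moment ω x :=
  setIntegral_mono_on (integrableOn_rpow_mul hω le_rfl le_rfl (hx.trans hxy))
    (integrableOn_rpow_mul hω le_rfl le_rfl hx) measurableSet_Ioc fun s hs =>
      mul_le_mul_of_nonneg_right (rpow_le_rpow_of_exponent_ge hs.1 hs.2 hxy) (hnn s)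

lemma tail_le_two_mul_moment {x : ℝ} (hnn : ∀ s, 0 ≤ ω s) (hω : IntegrableOn ω (Ioc 0 1))
    (hx : 1 / 2 ≤ x) : tail ω (1 - 1 / (4 * x)) ≤ 2 * moment ω (2 * x) := by
  have hx0 : 0 < x := by linarith
  have hu : 1 / (4 * x) ≤ 1 / 2 := by
    rw [div_le_div_iff₀ (by positivity) two_pos]; linarith
  have hbernoulli : 1 / 2 ≤ (1 - 1 / (4 * x)) ^ (2 * x) := by
    have h := one_add_mul_self_le_rpow_one_add (s := -(1 / (4 * x))) (by linarith)
      (p := 2 * x) (by linarith)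
    rwa [← sub_eq_add_neg, show 1 + 2 * x * -(1 / (4 * x)) = 1 / 2 by field_simp; ring] at h
  calc tail ω (1 - 1 / (4 * x)) = 2 * (1 / 2 * tail ω (1 - 1 / (4 * x))) := by ring
    _ ≤ 2 * ((1 - 1 / (4 * x)) ^ (2 * x) * tail ω (1 - 1 / (4 * x))) := by
        gcongr; exact tail_nonneg hnn _
    _ ≤ 2 * moment ω (2 * x) := by
        gcongr; exact rpow_mul_tail_le_moment hnn hω (by linarith) (by linarith)

lemma moment_le_mul_tail {C' β x δ : ℝ} (hnn : ∀ s, 0 ≤ ω s) (hω : IntegrableOn ω (Ioc 0 1))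
    (hC' : 0 ≤ C') (hβ : 0 ≤ β)
    (hD : ∀ r t : ℝ, 0 ≤ r → r ≤ t → t < 1 → tail ω r ≤ C' * ((1 - r) / (1 - t)) ^ β * tail ω t)
    (hx : 0 < x) (hδ : 0 < δ) (hδ1 : δ ≤ 1) :
    moment ω x ≤
      (1 + C' * ∑' k : ℕ, exp (-(δ * x * 2 ^ k)) * ((2 : ℝ) ^ (k + 1)) ^ β) * tail ω (1 - δ) := by
  set r : ℕ → ℝ := fun k => max (1 - 2 ^ k * δ) 0 with hr
  have hr_anti : Antitone r := fun i j hij =>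
    max_le_max (by gcongr; exact one_le_two) le_rfl
  have hr_nonneg : ∀ k, 0 ≤ r k := fun k => le_max_right _ _
  have hr0 : r 0 = 1 - δ := by simp [hr, hδ1]
  have hr_le : ∀ k, r k ≤ 1 - δ := fun k => hr0 ▸ hr_anti k.zero_le
  obtain ⟨N, hN⟩ : ∃ N, r N = 0 := by
    obtain ⟨N, hN⟩ := pow_unbounded_of_one_lt δ⁻¹ one_lt_two
    exact ⟨N, max_eq_right (by linarith [(inv_lt_iff_one_lt_mul₀ hδ).1 hN])⟩
  set W := tail ω (1 - δ)
  have hW : 0 ≤ W := tail_nonneg hnn _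
  have piece : ∀ k, ∫ s in Ioc (r (k + 1)) (r k), s ^ x * ω s ≤
      C' * (exp (-(δ * x * 2 ^ k)) * ((2 : ℝ) ^ (k + 1)) ^ β) * W := by
    intro k
    have hrk : r k ^ x ≤ exp (-(δ * x * 2 ^ k)) := by
      have : r k ≤ exp (-(2 ^ k * δ)) := max_le (one_sub_le_exp_neg _) (exp_pos _).le
      calc r k ^ x ≤ exp (-(2 ^ k * δ)) ^ x := rpow_le_rpow (hr_nonneg k) this hx.le
        _ = exp (-(δ * x * 2 ^ k)) := by rw [← exp_mul]; ring_nf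
    have htail : tail ω (r (k + 1)) ≤ C' * ((2 : ℝ) ^ (k + 1)) ^ β * W := by
      refine (hD _ _ (hr_nonneg _) (hr_le _) (by linarith)).trans ?_
      have hratio : (1 - r (k + 1)) / (1 - (1 - δ)) ≤ 2 ^ (k + 1) := by
        rw [sub_sub_cancel, div_le_iff₀ hδ]
        linarith [le_max_left (1 - 2 ^ (k + 1) * δ) 0]
      gcongr
      exact div_nonneg (by linarith [hr_le (k + 1)]) (by linarith)
    calc ∫ s in Ioc (r (k + 1)) (r k), s ^ x * ω s
        ≤ r k ^ x * tail ω (r (k + 1)) :=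
          setIntegral_rpow_mul_le hnn (hω.mono_set (Ioc_subset_Ioc_left (hr_nonneg _)))
            (hr_nonneg _) (hr_anti k.le_succ) ((hr_le k).trans (by linarith)) hx.le
      _ ≤ exp (-(δ * x * 2 ^ k)) * (C' * ((2 : ℝ) ^ (k + 1)) ^ β * W) :=
          mul_le_mul hrk htail (tail_nonneg hnn _) (exp_pos _).le
      _ = _ := by ring
  have hsum := summable_exp_neg_mul_two_pow_mul_rpow (mul_pos hδ hx) β
  calc moment ω x = ∫ s in Ioc (r N) 1, s ^ x * ω s := by rw [hN, moment]
    _ = (∫ s in Ioc (r 0) 1, s ^ x * ω s) +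
          ∑ k ∈ Finset.range N, ∫ s in Ioc (r (k + 1)) (r k), s ^ x * ω s :=
        setIntegral_Ioc_eq_add_sum hr_anti (by linarith) N
          (hN ▸ integrableOn_rpow_mul hω le_rfl le_rfl hx.le)
    _ ≤ W + ∑ k ∈ Finset.range N,
          C' * (exp (-(δ * x * 2 ^ k)) * ((2 : ℝ) ^ (k + 1)) ^ β) * W := by
        gcongr with k
        · simpa [hr0] using setIntegral_rpow_mul_le hnn
            (hω.mono_set (Ioc_subset_Ioc_left (by linarith))) (by linarith) (by linarith)
            le_rfl hx.le
        · exact piece k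
    _ ≤ W + C' * (∑' k : ℕ, exp (-(δ * x * 2 ^ k)) * ((2 : ℝ) ^ (k + 1)) ^ β) * W := by
        rw [← Finset.sum_mul, ← Finset.mul_sum]
        gcongr
        exact hsum.sum_le_tsum _ fun k _ => by positivity
    _ = _ := by ring

end

end RadialWeight

open RadialWeight in
theorem stmt_3_general (ω : ℝ → ℝ) (hnn : ∀ r, 0 ≤ ω r)
    (hInt : IntegrableOn ω (Set.Ico (0:ℝ) 1))
    (What : ℝ → ℝ) (hWhat : ∀ r, What r = ∫ s in Set.Ioc r 1, ω s)
    (hDhat : ∃ C' > (0:ℝ), ∃ β > (0:ℝ), ∀ r t : ℝ, 0 ≤ r → r ≤ t → t < 1 →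
      What r ≤ C' * ((1 - r) / (1 - t)) ^ β * What t)
    (mom : ℝ → ℝ) (hmom : ∀ x, mom x = ∫ s in Set.Ioc (0:ℝ) 1, s ^ x * ω s) :
    ∃ c > (0:ℝ), ∃ C > (0:ℝ), ∀ x ≥ (1:ℝ),
      c * mom x ≤ mom (2 * x) ∧ mom (2 * x) ≤ C * mom x := by
  obtain ⟨C', hC', β, hβ, hD⟩ := hDhat
  obtain rfl : What = tail ω := funext hWhat
  obtain rfl : mom = moment ω := funext hmom
  have hω : IntegrableOn ω (Ioc 0 1) := hInt.congr_set_ae Ico_ae_eq_Ioc.symm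
  set A := 1 + C' * ∑' k : ℕ, exp (-(4⁻¹ * 2 ^ k)) * ((2 : ℝ) ^ (k + 1)) ^ β
  have hA : 0 < A := by
    have : 0 ≤ ∑' k : ℕ, exp (-(4⁻¹ * 2 ^ k)) * ((2 : ℝ) ^ (k + 1)) ^ β :=
      tsum_nonneg fun k => by positivity
    positivity
  refine ⟨(2 * A)⁻¹, by positivity, 1, one_pos, fun x hx => ⟨?_, ?_⟩⟩
  · have hx0 : 0 < x := by linarith
    have hupper := moment_le_mul_tail hnn hω hC'.le hβ.le hD hx0 (δ := 1 / (4 * x))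
      (by positivity) (by rw [div_le_one (by positivity)]; linarith)
    rw [show 1 / (4 * x) * x = 4⁻¹ by field_simp] at hupper
    rw [inv_mul_le_iff₀ (by positivity)]
    calc moment ω x ≤ A * tail ω (1 - 1 / (4 * x)) := hupper
      _ ≤ A * (2 * moment ω (2 * x)) := by
          gcongr; exact tail_le_two_mul_moment hnn hω (by linarith)
      _ = 2 * A * moment ω (2 * x) := by ring
  · rw [one_mul]
    exact moment_le_moment hnn hω (by linarith) (by linarith)

/-- If ω ∈ Ď and ω ∈ D̂ (the latter in the form
ω̂(r) ≤ C'((1-r)/(1-t))^β ω̂(t) for r ≤ t), then ω_{2x} ≍ ω_x for x ≥ 1. -/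
theorem stmt_3 (ω : ℝ → ℝ) (hnn : ∀ r, 0 ≤ ω r)
    (hInt : IntegrableOn ω (Set.Ico (0:ℝ) 1))
    (What : ℝ → ℝ) (hWhat : ∀ r, What r = ∫ s in Set.Ioc r 1, ω s)
    (hpos : ∀ r ∈ Set.Ico (0:ℝ) 1, 0 < What r)
    (hDcheck : ∃ K > (1:ℝ), ∃ C > (1:ℝ), ∀ r ∈ Set.Ico (0:ℝ) 1,
      C * What (1 - (1 - r) / K) ≤ What r)
    (hDhat : ∃ C' > (0:ℝ), ∃ β > (0:ℝ), ∀ r t : ℝ, 0 ≤ r → r ≤ t → t < 1 →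
      What r ≤ C' * ((1 - r) / (1 - t)) ^ β * What t)
    (mom : ℝ → ℝ) (hmom : ∀ x, mom x = ∫ s in Set.Ioc (0:ℝ) 1, s ^ x * ω s) :
    ∃ c > (0:ℝ), ∃ C > (0:ℝ), ∀ x ≥ (1:ℝ),
      c * mom x ≤ mom (2 * x) ∧ mom (2 * x) ≤ C * mom x :=
  stmt_3_general ω hnn hInt What hWhat hDhat mom hmom
end

section
/- Let 0 < p < ∞ and ω ∈ D̂. Then ∫_r^1 ω̂(t)(1-t)^{p-1} dt ≍ ω̂(r)(1-r)^p for all 0 ≤ r < 1, with constants depending only on p and ω. -/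
open MeasureTheory Set

/-!
The tail `ω̂` is nonnegative and antitone on `[0, 1]`. Bounding `ω̂(t) ≤ ω̂(r)` on `(r, 1]` gives
the upper estimate, since `∫_r^1 (1 - t)^(p - 1) dt = (1 - r)^p / p`. For the lower estimate keep
only `(r, (1 + r)/2]`, where `ω̂(t) ≥ ω̂((1 + r)/2) ≥ ω̂(r) / C` by the doubling condition, while
`∫_r^{(1+r)/2} (1 - t)^(p - 1) dt = (1 - 2^(-p)) (1 - r)^p / p`.
-/

section OneSubRpow

variable {p : ℝ}

lemma integrableOn_one_sub_rpow (hp : 0 < p) (a b : ℝ) :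
    IntegrableOn (fun t => (1 - t) ^ (p - 1)) (Ioc a b) := by
  simpa only [sub_sub_cancel] using
    ((intervalIntegral.intervalIntegrable_rpow' (by linarith : (-1 : ℝ) < p - 1)).comp_sub_left
      (a := 1 - a) (b := 1 - b) 1).1

lemma integral_Ioc_one_sub_rpow (hp : 0 < p) {a b : ℝ} (hab : a ≤ b) :
    ∫ t in Ioc a b, (1 - t) ^ (p - 1) = ((1 - a) ^ p - (1 - b) ^ p) / p := by
  rw [← intervalIntegral.integral_of_le hab,
    intervalIntegral.integral_comp_sub_left (fun x => x ^ (p - 1)),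
    integral_rpow (Or.inl (by linarith)), sub_add_cancel]

end OneSubRpow

section AntitoneWeight

variable {p : ℝ} {W : ℝ → ℝ} {r : ℝ}

lemma integrableOn_mul_one_sub_rpow (hp : 0 < p) (hW : AntitoneOn W (Icc r 1))
    (hW0 : ∀ t ∈ Icc r 1, 0 ≤ W t) :
    IntegrableOn (fun t => W t * (1 - t) ^ (p - 1)) (Ioc r 1) := by
  refine Integrable.mono' ((integrableOn_one_sub_rpow hp r 1).const_mul (W r)) ?_ ?_
  · exact (aemeasurable_restrict_of_antitoneOn measurableSet_Ioc
      (hW.mono Ioc_subset_Icc_self)).aestronglyMeasurable.mul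
      (by fun_prop : Measurable fun t : ℝ => (1 - t) ^ (p - 1)).aestronglyMeasurable
  · filter_upwards [ae_restrict_mem measurableSet_Ioc] with t ⟨hrt, ht1⟩
    have hr : r ∈ Icc r 1 := ⟨le_rfl, hrt.le.trans ht1⟩
    have ht : t ∈ Icc r 1 := ⟨hrt.le, ht1⟩
    rw [Real.norm_eq_abs, abs_of_nonneg (mul_nonneg (hW0 t ht) (by bound))]
    exact mul_le_mul_of_nonneg_right (hW hr ht hrt.le) (by bound)

lemma setIntegral_mul_one_sub_rpow_le (hp : 0 < p) (hW : AntitoneOn W (Icc r 1))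
    (hW0 : ∀ t ∈ Icc r 1, 0 ≤ W t) (hr : r ≤ 1) :
    ∫ t in Ioc r 1, W t * (1 - t) ^ (p - 1) ≤ W r * (1 - r) ^ p / p := by
  calc ∫ t in Ioc r 1, W t * (1 - t) ^ (p - 1)
      ≤ ∫ t in Ioc r 1, W r * (1 - t) ^ (p - 1) := by
        refine setIntegral_mono_on (integrableOn_mul_one_sub_rpow hp hW hW0)
          ((integrableOn_one_sub_rpow hp r 1).const_mul _) measurableSet_Ioc ?_
        rintro t ⟨hrt, ht1⟩
        exact mul_le_mul_of_nonneg_right (hW ⟨le_rfl, hr⟩ ⟨hrt.le, ht1⟩ hrt.le) (by bound)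
    _ = W r * (1 - r) ^ p / p := by
        rw [integral_const_mul, integral_Ioc_one_sub_rpow hp hr, sub_self,
          Real.zero_rpow hp.ne', sub_zero, mul_div_assoc]

lemma mul_sub_le_setIntegral_mul_one_sub_rpow (hp : 0 < p) (hW : AntitoneOn W (Icc r 1))
    (hW0 : ∀ t ∈ Icc r 1, 0 ≤ W t) {s : ℝ} (hrs : r ≤ s) (hs : s ≤ 1) :
    W s * (((1 - r) ^ p - (1 - s) ^ p) / p) ≤ ∫ t in Ioc r 1, W t * (1 - t) ^ (p - 1) := by
  have hint := integrableOn_mul_one_sub_rpow hp hW hW0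
  calc W s * (((1 - r) ^ p - (1 - s) ^ p) / p)
      = ∫ t in Ioc r s, W s * (1 - t) ^ (p - 1) := by
        rw [integral_const_mul, integral_Ioc_one_sub_rpow hp hrs]
    _ ≤ ∫ t in Ioc r s, W t * (1 - t) ^ (p - 1) := by
        refine setIntegral_mono_on ((integrableOn_one_sub_rpow hp r s).const_mul _)
          (hint.mono_set (Ioc_subset_Ioc_right hs)) measurableSet_Ioc ?_
        rintro t ⟨hrt, hts⟩
        exact mul_le_mul_of_nonneg_right (hW ⟨hrt.le, hts.trans hs⟩ ⟨hrs, hs⟩ hts)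
          (by bound)
    _ ≤ ∫ t in Ioc r 1, W t * (1 - t) ^ (p - 1) := by
        refine setIntegral_mono_set hint ?_ (Ioc_subset_Ioc_right hs).eventuallyLE
        filter_upwards [ae_restrict_mem measurableSet_Ioc] with t ⟨hrt, ht1⟩
        exact mul_nonneg (hW0 t ⟨hrt.le, ht1⟩) (by bound)

end AntitoneWeight

lemma antitoneOn_integral_Ioc_one {ω : ℝ → ℝ} (hω : ∀ x, 0 ≤ ω x)
    (hωi : IntegrableOn ω (Ico 0 1)) :
    AntitoneOn (fun r => ∫ s in Ioc r 1, ω s) (Icc 0 1) := by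
  intro a ⟨ha0, _⟩ b _ hab
  refine setIntegral_mono_set ?_ (ae_of_all _ fun x => hω x)
    (Ioc_subset_Ioc_left hab).eventuallyLE
  rw [← integrableOn_Icc_iff_integrableOn_Ico] at hωi
  exact hωi.mono_set (Ioc_subset_Icc_self.trans (Icc_subset_Icc_left ha0))

theorem stmt_5_general (p : ℝ) (hp : 0 < p) (ω : ℝ → ℝ) (hnn : ∀ r, 0 ≤ ω r)
    (hInt : IntegrableOn ω (Set.Ico (0:ℝ) 1))
    (What : ℝ → ℝ) (hWhat : ∀ r, What r = ∫ s in Set.Ioc r 1, ω s)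
    (hD : ∃ C ≥ (1:ℝ), ∀ r ∈ Set.Ico (0:ℝ) 1, What r ≤ C * What ((1 + r) / 2)) :
    ∃ c > (0:ℝ), ∃ C > (0:ℝ), ∀ r ∈ Set.Ico (0:ℝ) 1,
      c * (What r * (1 - r) ^ p) ≤ (∫ t in Set.Ioc r 1, What t * (1 - t) ^ (p - 1)) ∧
      (∫ t in Set.Ioc r 1, What t * (1 - t) ^ (p - 1)) ≤ C * (What r * (1 - r) ^ p) := by
  obtain ⟨C, hC1, hC⟩ := hD
  have hq : (1 / 2 : ℝ) ^ p < 1 := Real.rpow_lt_one (by norm_num) (by norm_num) hp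
  refine ⟨(1 - (1 / 2) ^ p) / (p * C), by bound, 1 / p, by positivity, ?_⟩
  rintro r ⟨hr0, hr1⟩
  have hW : AntitoneOn What (Icc r 1) := funext hWhat ▸
    (antitoneOn_integral_Ioc_one hnn hInt).mono (Icc_subset_Icc_left hr0)
  have hW0 : ∀ t ∈ Icc r 1, 0 ≤ What t :=
    fun t _ => hWhat t ▸ setIntegral_nonneg measurableSet_Ioc fun x _ => hnn x
  constructor
  · have hmid : (1 - (1 + r) / 2) ^ p = (1 / 2) ^ p * (1 - r) ^ p := by
      rw [← Real.mul_rpow (by norm_num) (by linarith)]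
      ring_nf
    calc (1 - (1 / 2) ^ p) / (p * C) * (What r * (1 - r) ^ p)
        ≤ (1 - (1 / 2) ^ p) / (p * C) * (C * What ((1 + r) / 2) * (1 - r) ^ p) := by
          gcongr
          exact hC r ⟨hr0, hr1⟩
      _ = What ((1 + r) / 2) * (((1 - r) ^ p - (1 - (1 + r) / 2) ^ p) / p) := by
          rw [hmid]
          field_simp
      _ ≤ _ := mul_sub_le_setIntegral_mul_one_sub_rpow hp hW hW0 (by linarith) (by linarith)
  · calc _ ≤ What r * (1 - r) ^ p / p := setIntegral_mul_one_sub_rpow_le hp hW hW0 hr1.le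
      _ = 1 / p * (What r * (1 - r) ^ p) := by ring

/-- If ω ∈ D̂ and 0 < p < ∞, then ∫_r^1 ω̂(t)(1-t)^{p-1} dt ≍ ω̂(r)(1-r)^p. -/
theorem stmt_5 (p : ℝ) (hp : 0 < p) (ω : ℝ → ℝ) (hnn : ∀ r, 0 ≤ ω r)
    (hInt : IntegrableOn ω (Set.Ico (0:ℝ) 1))
    (What : ℝ → ℝ) (hWhat : ∀ r, What r = ∫ s in Set.Ioc r 1, ω s)
    (hpos : ∀ r ∈ Set.Ico (0:ℝ) 1, 0 < What r)
    (hD : ∃ C ≥ (1:ℝ), ∀ r ∈ Set.Ico (0:ℝ) 1, What r ≤ C * What ((1 + r) / 2)) :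
    ∃ c > (0:ℝ), ∃ C > (0:ℝ), ∀ r ∈ Set.Ico (0:ℝ) 1,
      c * (What r * (1 - r) ^ p) ≤ (∫ t in Set.Ioc r 1, What t * (1 - t) ^ (p - 1)) ∧
      (∫ t in Set.Ioc r 1, What t * (1 - t) ^ (p - 1)) ≤ C * (What r * (1 - r) ^ p) :=
  stmt_5_general p hp ω hnn hInt What hWhat hD
end

section
/- Let 0 < p < ∞ and let ω be a radial weight in D̂. Define h_ω(r) = ∫_r^1 (t - r)^{p-1} ω(t) dt. Then for every a ∈ [0,1), ∫_a^1 h_ω(s) s ds ≤ C ∫_a^1 ω̂(t)(1-t)^{p-1} dt for a constant C = C(p,ω) independent of a. -/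
/-!
Since `h_ω` is a fractional integral of `ω`, Tonelli's theorem gives
`∫_a^1 h_ω(s) ds = ∫_a^1 ω(t) (t - a)^p / p dt ≤ (1 - a)^p ω̂(a) / p`.
On the other side `ω̂` is decreasing, so the part of `∫_a^1 ω̂(t) (1 - t)^(p-1) dt` over
`[a, (1 + a)/2]` is at least `ω̂((1 + a)/2) (1 - 2^(-p)) (1 - a)^p / p`, and the doubling condition
`ω̂(a) ≤ C ω̂((1 + a)/2)` links the two bounds with the constant `C / (1 - 2^(-p))`.
-/

open MeasureTheory Set
open scoped ENNReal

lemma ofReal_integral_le_lintegral_ofReal {α : Type*} [MeasurableSpace α] {μ : Measure α}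
    {f : α → ℝ} (hf : 0 ≤ᵐ[μ] f) :
    ENNReal.ofReal (∫ x, f x ∂μ) ≤ ∫⁻ x, ENNReal.ofReal (f x) ∂μ :=
  calc ENNReal.ofReal (∫ x, f x ∂μ) ≤ ‖∫ x, f x ∂μ‖ₑ := Real.ofReal_le_enorm _
    _ ≤ ∫⁻ x, ‖f x‖ₑ ∂μ := enorm_integral_le_lintegral_enorm _
    _ = _ := lintegral_congr_ae (hf.mono fun _ hx => Real.enorm_of_nonneg hx)

lemma antitoneOn_integral_Ioc {a b : ℝ} {ω : ℝ → ℝ} (hω : ∀ t ∈ Ioc a b, 0 ≤ ω t)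
    (hωi : IntegrableOn ω (Ioc a b)) : AntitoneOn (fun r => ∫ t in Ioc r b, ω t) (Icc a b) :=
  fun _ hr _ _ hrr' => setIntegral_mono_set (hωi.mono_set (Ioc_subset_Ioc_left hr.1))
    (ae_restrict_of_forall_mem measurableSet_Ioc fun t ht => hω t ⟨hr.1.trans_lt ht.1, ht.2⟩)
    (Ioc_subset_Ioc_left hrr').eventuallyLE

section

variable {p : ℝ}

lemma intervalIntegrable_sub_rpow_sub_one (hp : 0 < p) (a b c : ℝ) :
    IntervalIntegrable (fun s => (c - s) ^ (p - 1)) volume a b := by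
  simpa using (intervalIntegral.intervalIntegrable_rpow' (a := c - a) (b := c - b)
    (r := p - 1) (by linarith)).comp_sub_left c

lemma integral_Ioc_sub_rpow_sub_one (hp : 0 < p) {a b : ℝ} (c : ℝ) (hab : a ≤ b) :
    ∫ s in Ioc a b, (c - s) ^ (p - 1) = ((c - a) ^ p - (c - b) ^ p) / p := by
  rw [← intervalIntegral.integral_of_le hab,
    intervalIntegral.integral_comp_sub_left (fun x => x ^ (p - 1)) c,
    integral_rpow (Or.inl (by linarith)), sub_add_cancel]

lemma lintegral_Ioo_ofReal_sub_rpow_sub_one (hp : 0 < p) {a t : ℝ} (hat : a ≤ t) :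
    ∫⁻ s in Ioo a t, ENNReal.ofReal ((t - s) ^ (p - 1)) = ENNReal.ofReal ((t - a) ^ p / p) := by
  rw [← ofReal_integral_eq_lintegral_ofReal
      ((intervalIntegrable_sub_rpow_sub_one hp a t t).1.mono_set Ioo_subset_Ioc_self)
      (ae_restrict_of_forall_mem measurableSet_Ioo fun s hs =>
        Real.rpow_nonneg (sub_nonneg.2 hs.2.le) _),
    ← integral_Ioc_eq_integral_Ioo, integral_Ioc_sub_rpow_sub_one hp t hat, sub_self,
    Real.zero_rpow hp.ne', sub_zero]

theorem lintegral_Ioc_lintegral_Ioc_sub_rpow_mul (hp : 0 < p) {a b : ℝ} {f : ℝ → ℝ≥0∞}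
    (hf : AEMeasurable f (volume.restrict (Ioc a b))) :
    ∫⁻ s in Ioc a b, ∫⁻ t in Ioc s b, ENNReal.ofReal ((t - s) ^ (p - 1)) * f t =
      ∫⁻ t in Ioc a b, ENNReal.ofReal ((t - a) ^ p / p) * f t := by
  set μ := volume.restrict (Ioc a b)
  -- the kernel on the triangle `s < t`, so that both iterated integrals run over `Ioc a b`
  set K : ℝ → ℝ → ℝ≥0∞ := fun s t =>
    {z : ℝ × ℝ | z.1 < z.2}.indicator (fun z => ENNReal.ofReal ((z.2 - z.1) ^ (p - 1))) (s, t)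
  have hK : Measurable (Function.uncurry K) :=
    (by fun_prop : Measurable fun z : ℝ × ℝ => ENNReal.ofReal ((z.2 - z.1) ^ (p - 1))).indicator
      (measurableSet_lt measurable_fst measurable_snd)
  have inner_t : ∀ s ∈ Ioc a b, ∫⁻ t in Ioc s b, ENNReal.ofReal ((t - s) ^ (p - 1)) * f t =
      ∫⁻ t, K s t * f t ∂μ := by
    intro s hs
    have hK_s : (fun t => K s t * f t) =
        (Ioi s).indicator (fun t => ENNReal.ofReal ((t - s) ^ (p - 1)) * f t) := by
      ext t
      by_cases hst : s < t <;> simp [K, hst]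
    rw [hK_s, lintegral_indicator measurableSet_Ioi, Measure.restrict_restrict measurableSet_Ioi,
      inter_comm, Ioc_inter_Ioi, sup_eq_right.2 hs.1.le]
  have inner_s : ∀ t ∈ Ioc a b, ∫⁻ s, K s t ∂μ = ENNReal.ofReal ((t - a) ^ p / p) := by
    intro t ht
    have hK_t : (fun s => K s t) =
        (Iio t).indicator (fun s => ENNReal.ofReal ((t - s) ^ (p - 1))) := by
      ext s
      by_cases hst : s < t <;> simp [K, hst]
    rw [hK_t, lintegral_indicator measurableSet_Iio, Measure.restrict_restrict measurableSet_Iio,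
      ← lintegral_Ioo_ofReal_sub_rpow_sub_one hp ht.1.le]
    congr 2
    ext s
    simp only [mem_inter_iff, mem_Iio, mem_Ioc, mem_Ioo]
    constructor
    · rintro ⟨hst, has, -⟩; exact ⟨has, hst⟩
    · rintro ⟨has, hst⟩; exact ⟨hst, has, hst.le.trans ht.2⟩
  calc _ = ∫⁻ s, ∫⁻ t, K s t * f t ∂μ ∂μ := setLIntegral_congr_fun measurableSet_Ioc inner_t
    _ = ∫⁻ t, ∫⁻ s, K s t * f t ∂μ ∂μ :=
      lintegral_lintegral_swap (hK.aemeasurable.mul hf.comp_snd)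
    _ = ∫⁻ t, (∫⁻ s, K s t ∂μ) * f t ∂μ := by
      congr 1; ext t
      exact lintegral_mul_const'' _ (hK.of_uncurry_right.aemeasurable)
    _ = _ := setLIntegral_congr_fun measurableSet_Ioc fun t ht => by rw [inner_s t ht]

theorem lintegral_Ioc_ofReal_integral_Ioc_sub_rpow_mul_le (hp : 0 < p) {a b : ℝ} {ω : ℝ → ℝ}
    (hω : ∀ t ∈ Ioc a b, 0 ≤ ω t) (hωi : IntegrableOn ω (Ioc a b)) :
    ∫⁻ s in Ioc a b, ENNReal.ofReal (∫ t in Ioc s b, (t - s) ^ (p - 1) * ω t) ≤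
      ENNReal.ofReal ((b - a) ^ p / p) * ENNReal.ofReal (∫ t in Ioc a b, ω t) :=
  calc _ ≤ ∫⁻ s in Ioc a b, ∫⁻ t in Ioc s b,
        ENNReal.ofReal ((t - s) ^ (p - 1)) * ENNReal.ofReal (ω t) := by
        refine setLIntegral_mono' measurableSet_Ioc fun s hs => ?_
        refine (ofReal_integral_le_lintegral_ofReal (ae_restrict_of_forall_mem measurableSet_Ioc
          fun t ht => ?_)).trans_eq (setLIntegral_congr_fun measurableSet_Ioc fun t ht => ?_)
        · exact mul_nonneg (Real.rpow_nonneg (sub_nonneg.2 ht.1.le) _)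
            (hω t ⟨hs.1.trans ht.1, ht.2⟩)
        · exact ENNReal.ofReal_mul (Real.rpow_nonneg (sub_nonneg.2 ht.1.le) _)
    _ = ∫⁻ t in Ioc a b, ENNReal.ofReal ((t - a) ^ p / p) * ENNReal.ofReal (ω t) :=
        lintegral_Ioc_lintegral_Ioc_sub_rpow_mul hp hωi.aemeasurable.ennreal_ofReal
    _ ≤ ∫⁻ t in Ioc a b, ENNReal.ofReal ((b - a) ^ p / p) * ENNReal.ofReal (ω t) := by
        refine setLIntegral_mono' measurableSet_Ioc fun t ht => ?_
        gcongr
        · exact sub_nonneg.2 ht.1.le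
        · exact ht.2
    _ = _ := by
        rw [lintegral_const_mul' _ _ ENNReal.ofReal_ne_top, ofReal_integral_eq_lintegral_ofReal hωi
          (ae_restrict_of_forall_mem measurableSet_Ioc hω)]

theorem integral_Ioc_integral_Ioc_sub_rpow_mul_mul_le (hp : 0 < p) {a : ℝ} (ha₀ : 0 ≤ a)
    (ha : a ≤ 1) {ω : ℝ → ℝ} (hω : ∀ t ∈ Ioc a 1, 0 ≤ ω t) (hωi : IntegrableOn ω (Ioc a 1)) :
    ∫ s in Ioc a 1, (∫ t in Ioc s 1, (t - s) ^ (p - 1) * ω t) * s ≤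
      (1 - a) ^ p / p * ∫ t in Ioc a 1, ω t := by
  have hH : ∀ s ∈ Ioc a 1, 0 ≤ ∫ t in Ioc s 1, (t - s) ^ (p - 1) * ω t := fun s hs =>
    setIntegral_nonneg measurableSet_Ioc fun t ht =>
      mul_nonneg (Real.rpow_nonneg (sub_nonneg.2 ht.1.le) _) (hω t ⟨hs.1.trans ht.1, ht.2⟩)
  have hc : 0 ≤ (1 - a) ^ p / p :=
    div_nonneg (Real.rpow_nonneg (sub_nonneg.2 ha) _) hp.le
  have hW : 0 ≤ ∫ t in Ioc a 1, ω t := setIntegral_nonneg measurableSet_Ioc hω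
  rw [← ENNReal.ofReal_le_ofReal_iff (mul_nonneg hc hW), ENNReal.ofReal_mul hc]
  calc _ ≤ ∫⁻ s in Ioc a 1, ENNReal.ofReal ((∫ t in Ioc s 1, (t - s) ^ (p - 1) * ω t) * s) :=
        ofReal_integral_le_lintegral_ofReal (ae_restrict_of_forall_mem measurableSet_Ioc
          fun s hs => mul_nonneg (hH s hs) (ha₀.trans hs.1.le))
    _ ≤ ∫⁻ s in Ioc a 1, ENNReal.ofReal (∫ t in Ioc s 1, (t - s) ^ (p - 1) * ω t) :=
        setLIntegral_mono' measurableSet_Ioc fun s hs =>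
          ENNReal.ofReal_le_ofReal (mul_le_of_le_one_right (hH s hs) hs.2)
    _ ≤ _ := lintegral_Ioc_ofReal_integral_Ioc_sub_rpow_mul_le hp hω hωi

theorem le_integral_Ioc_mul_one_sub_rpow (hp : 0 < p) {a : ℝ} (ha : a ≤ 1)
    {W : ℝ → ℝ} (hW : AntitoneOn W (Icc a 1)) (hW1 : 0 ≤ W 1) :
    W ((1 + a) / 2) * ((1 - a) ^ p * (1 - (1 / 2) ^ p) / p) ≤
      ∫ t in Ioc a 1, W t * (1 - t) ^ (p - 1) := by
  have ham : a ≤ (1 + a) / 2 := by linarith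
  have hm1 : (1 + a) / 2 ≤ 1 := by linarith
  set m := (1 + a) / 2
  have hWnn : ∀ t ∈ Icc a 1, 0 ≤ W t := fun t ht =>
    hW1.trans (hW ht (right_mem_Icc.2 ha) ht.2)
  have hint : IntegrableOn (fun t => W t * (1 - t) ^ (p - 1)) (Ioc a 1) := by
    refine (intervalIntegrable_sub_rpow_sub_one hp a 1 1).1.bdd_mul
      ((aemeasurable_restrict_of_antitoneOn measurableSet_Icc hW).mono_measure
        (Measure.restrict_mono Ioc_subset_Icc_self le_rfl)).aestronglyMeasurable
      (c := W a) (ae_restrict_of_forall_mem measurableSet_Ioc fun t ht => ?_)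
    rw [Real.norm_of_nonneg (hWnn t (Ioc_subset_Icc_self ht))]
    exact hW (left_mem_Icc.2 ha) (Ioc_subset_Icc_self ht) ht.1.le
  calc _ = ∫ t in Ioc a m, W m * (1 - t) ^ (p - 1) := by
        rw [integral_const_mul, integral_Ioc_sub_rpow_sub_one hp 1 ham,
          show 1 - m = (1 - a) * (1 / 2) by ring,
          Real.mul_rpow (sub_nonneg.2 ha) (by norm_num)]
        ring
    _ ≤ ∫ t in Ioc a m, W t * (1 - t) ^ (p - 1) :=
        setIntegral_mono_on (((intervalIntegrable_sub_rpow_sub_one hp a m 1).1).const_mul _)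
          (hint.mono_set (Ioc_subset_Ioc_right hm1)) measurableSet_Ioc fun t ht =>
          mul_le_mul_of_nonneg_right
            (hW ⟨ht.1.le, ht.2.trans hm1⟩ ⟨ham, hm1⟩ ht.2)
            (Real.rpow_nonneg (sub_nonneg.2 (ht.2.trans hm1)) _)
    _ ≤ _ := setIntegral_mono_set hint
        (ae_restrict_of_forall_mem measurableSet_Ioc fun t ht =>
          mul_nonneg (hWnn t (Ioc_subset_Icc_self ht)) (Real.rpow_nonneg (sub_nonneg.2 ht.2) _))
        (Ioc_subset_Ioc_right hm1).eventuallyLE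

end

theorem stmt_6_general (p : ℝ) (hp : 0 < p) (ω : ℝ → ℝ) (hnn : ∀ r, 0 ≤ ω r)
    (hInt : IntegrableOn ω (Set.Ico (0:ℝ) 1))
    (What : ℝ → ℝ) (hWhat : ∀ r, What r = ∫ s in Set.Ioc r 1, ω s)
    (hD : ∃ C ≥ (1:ℝ), ∀ r ∈ Set.Ico (0:ℝ) 1, What r ≤ C * What ((1 + r) / 2))
    (h : ℝ → ℝ) (hh : ∀ r, h r = ∫ t in Set.Ioc r 1, (t - r) ^ (p - 1) * ω t) :
    ∃ C > (0:ℝ), ∀ a ∈ Set.Ico (0:ℝ) 1,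
      (∫ s in Set.Ioc a 1, h s * s) ≤
        C * ∫ t in Set.Ioc a 1, What t * (1 - t) ^ (p - 1) := by
  obtain ⟨C, hC1, hC⟩ := hD
  have hq : (1 / 2 : ℝ) ^ p < 1 := Real.rpow_lt_one (by norm_num) (by norm_num) hp
  have hC' : 0 < C / (1 - (1 / 2) ^ p) := div_pos (by linarith) (by linarith)
  refine ⟨_, hC', fun a ha => ?_⟩
  have hωi : IntegrableOn ω (Ioc a 1) :=
    ((integrableOn_Icc_iff_integrableOn_Ico).2 hInt).mono_set
      (Ioc_subset_Icc_self.trans (Icc_subset_Icc_left ha.1))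
  have hWhat_anti : AntitoneOn What (Icc a 1) := by
    simpa only [← hWhat] using antitoneOn_integral_Ioc (fun t _ => hnn t) hωi
  have upper := integral_Ioc_integral_Ioc_sub_rpow_mul_mul_le hp ha.1 ha.2.le
    (fun t _ => hnn t) hωi
  have lower := le_integral_Ioc_mul_one_sub_rpow hp ha.2.le hWhat_anti
    (by simp [hWhat])
  simp only [← hh, ← hWhat] at upper
  have hc : 0 ≤ (1 - a) ^ p / p := div_nonneg (Real.rpow_nonneg (sub_nonneg.2 ha.2.le) _) hp.le
  calc _ ≤ (1 - a) ^ p / p * What a := upper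
    _ ≤ (1 - a) ^ p / p * (C * What ((1 + a) / 2)) := mul_le_mul_of_nonneg_left (hC a ha) hc
    _ = C / (1 - (1 / 2) ^ p) * (What ((1 + a) / 2) * ((1 - a) ^ p * (1 - (1 / 2) ^ p) / p)) := by
        have hq' : (1 : ℝ) - (1 / 2) ^ p ≠ 0 := by linarith
        field_simp
    _ ≤ _ := mul_le_mul_of_nonneg_left lower hC'.le

/-- If ω ∈ D̂ and h_ω(r) = ∫_r^1 (t-r)^{p-1} ω(t) dt, then
∫_a^1 h_ω(s) s ds ≤ C ∫_a^1 ω̂(t)(1-t)^{p-1} dt for all 0 ≤ a < 1. -/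
theorem stmt_6 (p : ℝ) (hp : 0 < p) (ω : ℝ → ℝ) (hnn : ∀ r, 0 ≤ ω r)
    (hInt : IntegrableOn ω (Set.Ico (0:ℝ) 1))
    (What : ℝ → ℝ) (hWhat : ∀ r, What r = ∫ s in Set.Ioc r 1, ω s)
    (hpos : ∀ r ∈ Set.Ico (0:ℝ) 1, 0 < What r)
    (hD : ∃ C ≥ (1:ℝ), ∀ r ∈ Set.Ico (0:ℝ) 1, What r ≤ C * What ((1 + r) / 2))
    (h : ℝ → ℝ) (hh : ∀ r, h r = ∫ t in Set.Ioc r 1, (t - r) ^ (p - 1) * ω t) :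
    ∃ C > (0:ℝ), ∀ a ∈ Set.Ico (0:ℝ) 1,
      (∫ s in Set.Ioc a 1, h s * s) ≤
        C * ∫ t in Set.Ioc a 1, What t * (1 - t) ^ (p - 1) :=
  stmt_6_general p hp ω hnn hInt What hWhat hD h hh
end

section
/- Let 1 < p < ∞ and let ω be a radial weight in D̂. Define h_ω(r) = ∫_r^1 (t-r)^{p-1} ω(t) dt. Then there exists a constant c = c(p,ω) > 0 such that h_ω(r) ≥ c ω̂(r)(1-r)^{p-1} for all 0 ≤ r < 1. -/
open MeasureTheory Set

/-! Restricting `h_ω(r)` to `t ∈ ((1 + r)/2, 1]`, where `t - r ≥ (1 - r)/2`, gives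
`h_ω(r) ≥ ((1 - r)/2)^(p-1) ω̂((1 + r)/2)`, and the doubling condition `ω ∈ D̂` bounds
`ω̂((1 + r)/2)` from below by `ω̂(r)/C`. -/

lemma mul_setIntegral_Ioc_le_setIntegral_rpow_sub_mul {ω : ℝ → ℝ} {q a m b : ℝ}
    (hq : 0 ≤ q) (ham : a ≤ m) (hω : ∀ t ∈ Ioc a b, 0 ≤ ω t)
    (hint : IntegrableOn ω (Ioc a b)) :
    (m - a) ^ q * ∫ t in Ioc m b, ω t ≤ ∫ t in Ioc a b, (t - a) ^ q * ω t := by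
  have hsub : Ioc m b ⊆ Ioc a b := Ioc_subset_Ioc_left ham
  have hcont : ContinuousOn (fun t : ℝ => (t - a) ^ q) (Icc a b) :=
    ((continuous_id.sub continuous_const).rpow_const fun _ => Or.inr hq).continuousOn
  have hint_weighted : IntegrableOn (fun t => (t - a) ^ q * ω t) (Ioc a b) :=
    hint.continuousOn_mul_of_subset hcont isCompact_Icc measurableSet_Ioc Ioc_subset_Icc_self
  rw [← integral_const_mul]
  calc ∫ t in Ioc m b, (m - a) ^ q * ω t
      ≤ ∫ t in Ioc m b, (t - a) ^ q * ω t := by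
        refine setIntegral_mono_on ((hint.mono_set hsub).const_mul _)
          (hint_weighted.mono_set hsub) measurableSet_Ioc fun t ht => ?_
        exact mul_le_mul_of_nonneg_right
          (Real.rpow_le_rpow (sub_nonneg.2 ham) (by linarith [ht.1]) hq) (hω t (hsub ht))
    _ ≤ ∫ t in Ioc a b, (t - a) ^ q * ω t := by
        refine setIntegral_mono_set hint_weighted ?_ hsub.eventuallyLE
        filter_upwards [ae_restrict_mem measurableSet_Ioc] with t ht
        exact mul_nonneg (Real.rpow_nonneg (by linarith [ht.1]) _) (hω t ht)

theorem stmt_7_general (p : ℝ) (hp : 1 < p) (ω : ℝ → ℝ) (hnn : ∀ r, 0 ≤ ω r)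
    (hInt : IntegrableOn ω (Set.Ico (0:ℝ) 1))
    (What : ℝ → ℝ) (hWhat : ∀ r, What r = ∫ s in Set.Ioc r 1, ω s)
    (hD : ∃ C ≥ (1:ℝ), ∀ r ∈ Set.Ico (0:ℝ) 1, What r ≤ C * What ((1 + r) / 2))
    (h : ℝ → ℝ) (hh : ∀ r, h r = ∫ t in Set.Ioc r 1, (t - r) ^ (p - 1) * ω t) :
    ∃ c > (0:ℝ), ∀ r ∈ Set.Ico (0:ℝ) 1,
      c * (What r * (1 - r) ^ (p - 1)) ≤ h r := by
  obtain ⟨C, hC1, hC⟩ := hD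
  have hC0 : 0 < C := one_pos.trans_le hC1
  refine ⟨(C * 2 ^ (p - 1))⁻¹, by positivity, fun r hr => ?_⟩
  have hint : IntegrableOn ω (Ioc r 1) :=
    (integrableOn_Ioc_iff_integrableOn_Ioo).2
      (hInt.mono_set fun t ht => ⟨hr.1.trans ht.1.le, ht.2⟩)
  have hhalf := mul_setIntegral_Ioc_le_setIntegral_rpow_sub_mul (m := (1 + r) / 2)
    (sub_nonneg.2 hp.le) (by linarith [hr.2]) (fun t _ => hnn t) hint
  rw [← hWhat, ← hh, show (1 + r) / 2 - r = (1 - r) / 2 by ring,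
    Real.div_rpow (by linarith [hr.2]) zero_le_two] at hhalf
  refine le_trans ?_ hhalf
  calc (C * 2 ^ (p - 1))⁻¹ * (What r * (1 - r) ^ (p - 1))
      = (1 - r) ^ (p - 1) / 2 ^ (p - 1) * (What r / C) := by field_simp
    _ ≤ (1 - r) ^ (p - 1) / 2 ^ (p - 1) * What ((1 + r) / 2) := by
        gcongr
        · exact div_nonneg (Real.rpow_nonneg (by linarith [hr.2]) _) (by positivity)
        · exact (div_le_iff₀ hC0).2 (by linarith [hC r hr])

/-- If 1 < p < ∞ and ω ∈ D̂, then h_ω(r) ≥ c ω̂(r)(1-r)^{p-1}. -/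
theorem stmt_7 (p : ℝ) (hp : 1 < p) (ω : ℝ → ℝ) (hnn : ∀ r, 0 ≤ ω r)
    (hInt : IntegrableOn ω (Set.Ico (0:ℝ) 1))
    (What : ℝ → ℝ) (hWhat : ∀ r, What r = ∫ s in Set.Ioc r 1, ω s)
    (hpos : ∀ r ∈ Set.Ico (0:ℝ) 1, 0 < What r)
    (hD : ∃ C ≥ (1:ℝ), ∀ r ∈ Set.Ico (0:ℝ) 1, What r ≤ C * What ((1 + r) / 2))
    (h : ℝ → ℝ) (hh : ∀ r, h r = ∫ t in Set.Ioc r 1, (t - r) ^ (p - 1) * ω t) :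
    ∃ c > (0:ℝ), ∀ r ∈ Set.Ico (0:ℝ) 1,
      c * (What r * (1 - r) ^ (p - 1)) ≤ h r :=
  stmt_7_general p hp ω hnn hInt What hWhat hD h hh
end

section
/- Let 0 < p < ∞, p ≠ 2, and let ω be a radial weight. Then the spaces HL^ω_p and A^p_ω are different; more precisely, there is no constant C > 1 such that C^{-1}‖f‖_{HL^ω_p} ≤ ‖f‖_{A^p_ω} ≤ C‖f‖_{HL^ω_p} holds for all analytic f on the unit disc. In fact, for the monomials m_n(z) = z^n one has ‖m_n‖^p_{A^p_ω} = 2ω_{np+1} and ‖m_n‖^p_{HL^ω_p} = (n+1)^{p-2}ω_{np+1}, whose ratio tends to 0 or ∞ as n → ∞. -/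
/-!
The monomial `z ^ n` has `A^p_ω`-norm `(2 ω_{np+1}) ^ (1/p)` (polar coordinates) and
`HL^ω_p`-norm `((n+1) ^ (p-2) ω_{np+1}) ^ (1/p)` (it has a single Taylor coefficient), so the
ratio of the `p`-th powers of the two norms is `2 (n+1) ^ (2-p)`, free of `ω`. For `p ≠ 2` this
tends to `∞` or to `0`, whereas two-sided comparability with constant `C` would trap it
in `[C^{-p}, C^p]`.
-/

open MeasureTheory Set Filter Real

theorem setIntegral_ball_zero_one_fun_norm (g : ℝ → ℝ) :
    ∫ z in Metric.ball (0 : ℂ) 1, g ‖z‖ = 2 * π * ∫ r in Ioc 0 1, r * g r := by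
  have hball : ∫ z in Metric.ball (0 : ℂ) 1, g ‖z‖ = ∫ z : ℂ, (Iio 1).indicator g ‖z‖ := by
    rw [← integral_indicator measurableSet_ball]
    congr 1 with z
    by_cases h : ‖z‖ < 1 <;> simp [indicator, h]
  have hradial : ∫ r in Ioi (0 : ℝ), r ^ (2 - 1) • (Iio 1).indicator g r
      = ∫ r in Ioc 0 1, r * g r := by
    simp_rw [smul_eq_mul, show 2 - 1 = 1 from rfl, pow_one, ← indicator_mul_right _ (fun r => r)]
    rw [setIntegral_indicator measurableSet_Iio, Ioi_inter_Iio, integral_Ioc_eq_integral_Ioo]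
  rw [hball, integral_fun_norm_addHaar volume, Complex.finrank_real_complex, hradial]
  simp [Measure.real, Complex.volume_ball]
  ring

theorem integral_ball_norm_pow_rpow_mul (n : ℕ) (p : ℝ) (ω : ℝ → ℝ) :
    (1 / π) * ∫ z in Metric.ball (0 : ℂ) 1, ‖z ^ n‖ ^ p * ω ‖z‖
      = 2 * ∫ r in Ioc 0 1, r ^ ((n : ℝ) * p + 1) * ω r := by
  simp_rw [norm_pow]
  rw [setIntegral_ball_zero_one_fun_norm (fun r => (r ^ n) ^ p * ω r)]
  have hpoly : ∫ r in Ioc (0 : ℝ) 1, r * ((r ^ n) ^ p * ω r)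
      = ∫ r in Ioc 0 1, r ^ ((n : ℝ) * p + 1) * ω r := by
    refine setIntegral_congr_fun measurableSet_Ioc fun r hr => ?_
    rw [← rpow_natCast, ← rpow_mul hr.1.le, rpow_add hr.1, rpow_one]
    ring
  rw [hpoly]
  field_simp [pi_ne_zero]

theorem tsum_norm_iteratedDeriv_pow_div_factorial_rpow_mul {p : ℝ} (hp : p ≠ 0)
    (n : ℕ) (w : ℕ → ℝ) :
    ∑' m : ℕ, (‖iteratedDeriv m (fun z : ℂ => z ^ n) 0‖ / (m.factorial : ℝ)) ^ p * w m
      = w n := by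
  rw [tsum_eq_single n fun m hm => by
    rw [iteratedDeriv_fun_pow_zero, if_neg hm]
    simp [zero_rpow hp]]
  rw [iteratedDeriv_fun_pow_zero, if_pos rfl, Complex.norm_natCast,
    div_self (by positivity), one_rpow, one_mul]

theorem div_le_rpow_of_rpow_one_div_le_mul {p C a b : ℝ} (hp : 0 < p) (hC : 0 < C)
    (ha : 0 ≤ a) (hb : 0 < b) (h : a ^ (1 / p) ≤ C * b ^ (1 / p)) : a / b ≤ C ^ p := by
  have hcancel : ∀ x : ℝ, 0 ≤ x → (x ^ (1 / p)) ^ p = x := fun x hx => by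
    rw [← rpow_mul hx, one_div_mul_cancel hp.ne', rpow_one]
  have := rpow_le_rpow (by positivity) h hp.le
  rw [hcancel a ha, mul_rpow hC.le (by positivity), hcancel b hb.le] at this
  exact (div_le_iff₀ hb).2 this

theorem div_mem_Icc_of_rpow_one_div_comparable {p C a b : ℝ} (hp : 0 < p) (hC : 0 < C)
    (ha : 0 < a) (hb : 0 < b) (hlow : C⁻¹ * b ^ (1 / p) ≤ a ^ (1 / p))
    (hup : a ^ (1 / p) ≤ C * b ^ (1 / p)) : a / b ∈ Icc (C ^ p)⁻¹ (C ^ p) := by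
  refine ⟨?_, div_le_rpow_of_rpow_one_div_le_mul hp hC ha.le hb hup⟩
  have := div_le_rpow_of_rpow_one_div_le_mul hp hC hb.le ha
    (by rwa [inv_mul_le_iff₀ hC] at hlow)
  rwa [← inv_div, inv_le_comm₀ (div_pos ha hb) (rpow_pos_of_pos hC p)] at this

theorem not_forall_mem_Icc_of_tendsto_atTop_or_zero {u : ℕ → ℝ} {c : ℝ} (hc : 0 < c)
    (hu : Tendsto u atTop atTop ∨ Tendsto u atTop (nhds 0)) : ¬ ∀ n, u n ∈ Icc c⁻¹ c := by
  intro hbound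
  rcases hu with hu | hu
  · obtain ⟨n, hn⟩ := (hu.eventually_gt_atTop c).exists
    exact (hbound n).2.not_gt hn
  · obtain ⟨n, hn⟩ := (hu.eventually_lt_const (inv_pos.2 hc)).exists
    exact (hbound n).1.not_gt hn

theorem tendsto_natCast_add_one_rpow_atTop_or_zero {s : ℝ} (hs : s ≠ 0) :
    Tendsto (fun n : ℕ => ((n : ℝ) + 1) ^ s) atTop atTop ∨
      Tendsto (fun n : ℕ => ((n : ℝ) + 1) ^ s) atTop (nhds 0) := by
  have hlin : Tendsto (fun n : ℕ => (n : ℝ) + 1) atTop atTop :=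
    tendsto_atTop_add_const_right _ 1 tendsto_natCast_atTop_atTop
  rcases hs.lt_or_gt with hs | hs
  · right
    simpa [Function.comp_def] using (tendsto_rpow_neg_atTop (neg_pos.2 hs)).comp hlin
  · exact .inl ((tendsto_rpow_atTop hs).comp hlin)

theorem stmt_9_general (p : ℝ) (hp : 0 < p) (hpne : p ≠ 2)
    (ω : ℝ → ℝ)
    (mom : ℝ → ℝ) (hmom : ∀ x, mom x = ∫ s in Set.Ioc (0:ℝ) 1, s ^ x * ω s)
    (hmompos : ∀ x : ℝ, 0 ≤ x → 0 < mom x) :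
    (∀ n : ℕ, (1 / Real.pi) *
        (∫ z in Metric.ball (0:ℂ) 1, ‖z ^ n‖ ^ p * ω ‖z‖) =
        2 * mom ((n : ℝ) * p + 1)) ∧
    (∀ n : ℕ, (∑' m : ℕ,
        (‖iteratedDeriv m (fun z : ℂ => z ^ n) 0‖ / (m.factorial : ℝ)) ^ p *
          ((m : ℝ) + 1) ^ (p - 2) * mom ((m : ℝ) * p + 1)) =
        ((n : ℝ) + 1) ^ (p - 2) * mom ((n : ℝ) * p + 1)) ∧
    (Tendsto (fun n : ℕ =>
        (2 * mom ((n : ℝ) * p + 1)) / (((n : ℝ) + 1) ^ (p - 2) * mom ((n : ℝ) * p + 1)))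
        atTop atTop ∨
      Tendsto (fun n : ℕ =>
        (2 * mom ((n : ℝ) * p + 1)) / (((n : ℝ) + 1) ^ (p - 2) * mom ((n : ℝ) * p + 1)))
        atTop (nhds 0)) ∧
    ¬ ∃ C > (1:ℝ), ∀ f : ℂ → ℂ, AnalyticOnNhd ℂ f (Metric.ball 0 1) →
      C⁻¹ * (∑' m : ℕ,
          (‖iteratedDeriv m f 0‖ / (m.factorial : ℝ)) ^ p *
            ((m : ℝ) + 1) ^ (p - 2) * mom ((m : ℝ) * p + 1)) ^ (1 / p) ≤
          ((1 / Real.pi) *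
            ∫ z in Metric.ball (0:ℂ) 1, ‖f z‖ ^ p * ω ‖z‖) ^ (1 / p) ∧
        ((1 / Real.pi) *
            ∫ z in Metric.ball (0:ℂ) 1, ‖f z‖ ^ p * ω ‖z‖) ^ (1 / p) ≤
          C * (∑' m : ℕ,
            (‖iteratedDeriv m f 0‖ / (m.factorial : ℝ)) ^ p *
              ((m : ℝ) + 1) ^ (p - 2) * mom ((m : ℝ) * p + 1)) ^ (1 / p) := by
  have hBergman (n : ℕ) : (1 / π) * ∫ z in Metric.ball (0 : ℂ) 1, ‖z ^ n‖ ^ p * ω ‖z‖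
      = 2 * mom ((n : ℝ) * p + 1) := by rw [integral_ball_norm_pow_rpow_mul, hmom]
  have hHL (n : ℕ) : ∑' m : ℕ, (‖iteratedDeriv m (fun z : ℂ => z ^ n) 0‖ / (m.factorial : ℝ)) ^ p *
      ((m : ℝ) + 1) ^ (p - 2) * mom ((m : ℝ) * p + 1)
      = ((n : ℝ) + 1) ^ (p - 2) * mom ((n : ℝ) * p + 1) := by
    simp_rw [mul_assoc]
    exact tsum_norm_iteratedDeriv_pow_div_factorial_rpow_mul hp.ne' n _
  have hmomn (n : ℕ) : 0 < mom ((n : ℝ) * p + 1) := hmompos _ (by positivity)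
  have hHLpos (n : ℕ) : 0 < ((n : ℝ) + 1) ^ (p - 2) * mom ((n : ℝ) * p + 1) := by
    have := hmomn n; positivity
  have hratio (n : ℕ) : 2 * mom ((n : ℝ) * p + 1) / (((n : ℝ) + 1) ^ (p - 2) *
      mom ((n : ℝ) * p + 1)) = 2 * ((n : ℝ) + 1) ^ (2 - p) := by
    rw [mul_div_mul_right _ _ (hmomn n).ne', div_eq_mul_inv, ← rpow_neg (by positivity), neg_sub]
  have hT : Tendsto (fun n : ℕ => 2 * ((n : ℝ) + 1) ^ (2 - p)) atTop atTop ∨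
      Tendsto (fun n : ℕ => 2 * ((n : ℝ) + 1) ^ (2 - p)) atTop (nhds 0) :=
    (tendsto_natCast_add_one_rpow_atTop_or_zero (sub_ne_zero.2 hpne.symm)).imp
      (·.const_mul_atTop two_pos) (by simpa using ·.const_mul 2)
  refine ⟨hBergman, hHL, ?_, ?_⟩
  · simpa only [hratio] using hT
  rintro ⟨C, hC1, hall⟩
  have hC : 0 < C := one_pos.trans hC1
  have hbound (n : ℕ) : 2 * ((n : ℝ) + 1) ^ (2 - p) ∈ Icc (C ^ p)⁻¹ (C ^ p) := by
    obtain ⟨hlow, hup⟩ := hall (· ^ n) (analyticOnNhd_id.pow n)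
    simp only [hBergman, hHL] at hlow hup
    rw [← hratio]
    exact div_mem_Icc_of_rpow_one_div_comparable hp hC (by linarith [hmomn n]) (hHLpos n) hlow hup
  exact not_forall_mem_Icc_of_tendsto_atTop_or_zero (rpow_pos_of_pos hC p) hT hbound

/-- For p ≠ 2 the spaces HL^ω_p and A^p_ω differ: the monomial norms are
‖z^n‖^p_{A^p_ω} = 2ω_{np+1} and ‖z^n‖^p_{HL^ω_p} = (n+1)^{p-2}ω_{np+1}, the
ratio tends to 0 or ∞, and no constant C > 1 makes the two norms comparable
for all analytic f on the unit disc. -/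
theorem stmt_9 (p : ℝ) (hp : 0 < p) (hpne : p ≠ 2)
    (ω : ℝ → ℝ) (hnn : ∀ r, 0 ≤ ω r)
    (hInt : IntegrableOn ω (Set.Ico (0:ℝ) 1))
    (mom : ℝ → ℝ) (hmom : ∀ x, mom x = ∫ s in Set.Ioc (0:ℝ) 1, s ^ x * ω s)
    (hmompos : ∀ x : ℝ, 0 ≤ x → 0 < mom x) :
    (∀ n : ℕ, (1 / Real.pi) *
        (∫ z in Metric.ball (0:ℂ) 1, ‖z ^ n‖ ^ p * ω ‖z‖) =
        2 * mom ((n : ℝ) * p + 1)) ∧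
    (∀ n : ℕ, (∑' m : ℕ,
        (‖iteratedDeriv m (fun z : ℂ => z ^ n) 0‖ / (m.factorial : ℝ)) ^ p *
          ((m : ℝ) + 1) ^ (p - 2) * mom ((m : ℝ) * p + 1)) =
        ((n : ℝ) + 1) ^ (p - 2) * mom ((n : ℝ) * p + 1)) ∧
    (Tendsto (fun n : ℕ =>
        (2 * mom ((n : ℝ) * p + 1)) / (((n : ℝ) + 1) ^ (p - 2) * mom ((n : ℝ) * p + 1)))
        atTop atTop ∨
      Tendsto (fun n : ℕ =>
        (2 * mom ((n : ℝ) * p + 1)) / (((n : ℝ) + 1) ^ (p - 2) * mom ((n : ℝ) * p + 1)))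
        atTop (nhds 0)) ∧
    ¬ ∃ C > (1:ℝ), ∀ f : ℂ → ℂ, AnalyticOnNhd ℂ f (Metric.ball 0 1) →
      C⁻¹ * (∑' m : ℕ,
          (‖iteratedDeriv m f 0‖ / (m.factorial : ℝ)) ^ p *
            ((m : ℝ) + 1) ^ (p - 2) * mom ((m : ℝ) * p + 1)) ^ (1 / p) ≤
          ((1 / Real.pi) *
            ∫ z in Metric.ball (0:ℂ) 1, ‖f z‖ ^ p * ω ‖z‖) ^ (1 / p) ∧
        ((1 / Real.pi) *
            ∫ z in Metric.ball (0:ℂ) 1, ‖f z‖ ^ p * ω ‖z‖) ^ (1 / p) ≤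
          C * (∑' m : ℕ,
            (‖iteratedDeriv m f 0‖ / (m.factorial : ℝ)) ^ p *
              ((m : ℝ) + 1) ^ (p - 2) * mom ((m : ℝ) * p + 1)) ^ (1 / p) :=
  stmt_9_general p hp hpne ω mom hmom hmompos
end

section
/- Let 0 < p ≤ 1 and ω ∈ D̂. Then sup_{0≤r<1} (1-r)^{2-1/p} / ω̂(r)^{1/p} < ∞ if and only if sup_{0≤r<1} (1-r) Σ_{k=1}^∞ r^{2(k-1)} / (ω̂(1-1/k)^{1/p} k^{2-1/p}) < ∞. -/
/-!
Write `g = tailRatio (2 - 1/p) (1/p) ω̂`, i.e. `g r = (1 - r) ^ (2 - 1/p) / ω̂ r ^ (1/p)`; the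
`k`-th coefficient of the series is `g (1 - 1/(k+1))`. If `g ≤ M`, the series is at most
`M (1 - r) / (1 - r²) ≤ M`. Conversely, for `r ≥ 1/2` and `n = ⌈1/(1 - r)⌉`, each of the `n` terms
with `n ≤ k < 2n` has `r ^ (2k) ≥ e⁻¹²` and, as `ω̂` decreases and `2 - 1/p ≤ 1`, coefficient at
least `g r / 4`, so `(1 - r) Σ ≥ e⁻¹² g r / 4`. The `D̂` condition is only needed for the series to
converge (a divergent `tsum` is `0`): iterating it gives `ω̂ (1 - 1/k) ≳ k ^ (-log₂ C)`, so the
coefficients grow polynomially.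
-/

open MeasureTheory Set Real

lemma antitoneOn_setIntegral_Ioc_one {ω : ℝ → ℝ} (hnn : ∀ r, 0 ≤ ω r)
    (hInt : IntegrableOn ω (Ico 0 1)) :
    AntitoneOn (fun r => ∫ s in Ioc r 1, ω s) (Ici 0) := by
  intro a ha b _ hab
  have hIoc : IntegrableOn ω (Ioc 0 1) :=
    (integrableOn_Ioc_iff_integrableOn_Ioo).mpr ((integrableOn_Ico_iff_integrableOn_Ioo).mp hInt)
  exact setIntegral_mono_set (hIoc.mono_set (Ioc_subset_Ioc_left ha))
    (ae_of_all _ hnn) (Ioc_subset_Ioc_left hab).eventuallyLE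

lemma exp_neg_two_mul_le_pow {r : ℝ} (hr : 1 / 2 ≤ r) (hr1 : r ≤ 1) (m : ℕ) :
    exp (-(2 * m * (1 - r))) ≤ r ^ m := by
  have hr0 : 0 < r := by linarith
  have hlog : -(2 * (1 - r)) ≤ log r := by
    have hinv : r⁻¹ ≤ 2 := by rw [inv_le_comm₀ hr0 two_pos]; linarith
    have h := mul_nonneg (sub_nonneg.mpr hr1) (sub_nonneg.mpr hinv)
    nlinarith [one_sub_inv_le_log_of_pos hr0, mul_inv_cancel₀ hr0.ne']
  rw [← exp_log (pow_pos hr0 m), log_pow, exp_le_exp]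
  nlinarith [(Nat.cast_nonneg m : (0 : ℝ) ≤ m)]

lemma summable_succ_pow_mul_geometric (N : ℕ) {x : ℝ} (hx0 : 0 ≤ x) (hx1 : x < 1) :
    Summable fun k : ℕ => ((k : ℝ) + 1) ^ N * x ^ k := by
  have hnorm : ‖x‖ < 1 := by rwa [Real.norm_of_nonneg hx0]
  refine Summable.of_nonneg_of_le (fun k => by positivity) (fun k => ?_)
    (((summable_pow_mul_geometric_of_norm_lt_one N hnorm).add
      (summable_geometric_of_lt_one hx0 hx1)).mul_left (2 ^ (N - 1)))
  calc ((k : ℝ) + 1) ^ N * x ^ k ≤ 2 ^ (N - 1) * ((k : ℝ) ^ N + 1 ^ N) * x ^ k :=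
        mul_le_mul_of_nonneg_right (add_pow_le (Nat.cast_nonneg k) zero_le_one N) (by positivity)
    _ = 2 ^ (N - 1) * ((k : ℝ) ^ N * x ^ k + x ^ k) := by ring

lemma one_sub_mul_tsum_mul_pow_two_mul_le {c : ℕ → ℝ} {M r : ℝ} (hc : ∀ k, 0 ≤ c k)
    (hcM : ∀ k, c k ≤ M) (hr0 : 0 ≤ r) (hr1 : r < 1) :
    (1 - r) * ∑' k, c k * r ^ (2 * k) ≤ M := by
  have hr2 : r ^ 2 < 1 := by nlinarith
  have hle : ∀ k, c k * r ^ (2 * k) ≤ M * (r ^ 2) ^ k := fun k => by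
    rw [pow_mul]; exact mul_le_mul_of_nonneg_right (hcM k) (by positivity)
  have hgeom := (summable_geometric_of_lt_one (by positivity) hr2).mul_left M
  have hsum : ∑' k, c k * r ^ (2 * k) ≤ M * (1 - r ^ 2)⁻¹ := by
    rw [← tsum_geometric_of_lt_one (by positivity) hr2, ← tsum_mul_left]
    exact (hgeom.of_nonneg_of_le (fun k => mul_nonneg (hc k) (by positivity)) hle).tsum_le_tsum
      hle hgeom
  have hM : 0 ≤ M := (hc 0).trans (hcM 0)
  calc (1 - r) * ∑' k, c k * r ^ (2 * k) ≤ (1 - r) * (M * (1 - r ^ 2)⁻¹) :=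
        mul_le_mul_of_nonneg_left hsum (by linarith)
    _ = M / (1 + r) := by
        have h1r : 1 - r ≠ 0 := (sub_pos.mpr hr1).ne'
        rw [show 1 - r ^ 2 = (1 - r) * (1 + r) by ring]; field_simp
    _ ≤ M := div_le_self hM (by linarith)

lemma one_sub_mem_Ico {t : ℝ} (h0 : 0 < t) (h1 : t ≤ 1) : 1 - t ∈ Ico (0 : ℝ) 1 :=
  ⟨by linarith, by linarith⟩

lemma one_sub_inv_succ_mem_Ico (k : ℕ) : 1 - 1 / ((k : ℝ) + 1) ∈ Ico (0 : ℝ) 1 :=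
  one_sub_mem_Ico (by positivity) (div_le_one_of_le₀ (by linarith [k.cast_nonneg (α := ℝ)])
    (by positivity))

section Doubling

variable {W : ℝ → ℝ} {C : ℝ}

lemma le_pow_mul_one_sub_half_pow (hC0 : 0 ≤ C)
    (hD : ∀ r ∈ Ico (0 : ℝ) 1, W r ≤ C * W ((1 + r) / 2)) (j : ℕ) :
    W 0 ≤ C ^ j * W (1 - (1 / 2) ^ j) := by
  induction j with
  | zero => simp
  | succ j ih =>
    have hstep := hD (1 - (1 / 2 : ℝ) ^ j)
      (one_sub_mem_Ico (by positivity) (pow_le_one₀ (by norm_num) (by norm_num)))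
    rw [show (1 + (1 - (1 / 2 : ℝ) ^ j)) / 2 = 1 - (1 / 2) ^ (j + 1) by ring] at hstep
    calc W 0 ≤ C ^ j * W (1 - (1 / 2) ^ j) := ih
      _ ≤ C ^ j * (C * W (1 - (1 / 2) ^ (j + 1))) := by gcongr
      _ = C ^ (j + 1) * W (1 - (1 / 2) ^ (j + 1)) := by ring

lemma exists_le_mul_pow_mul_one_sub_inv (hW : AntitoneOn W (Ico 0 1))
    (hpos : ∀ r ∈ Ico (0 : ℝ) 1, 0 < W r) (hC0 : 0 ≤ C)
    (hD : ∀ r ∈ Ico (0 : ℝ) 1, W r ≤ C * W ((1 + r) / 2)) :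
    ∃ N : ℕ, ∀ k : ℕ, W 0 ≤ C * ((k : ℝ) + 1) ^ N * W (1 - 1 / ((k : ℝ) + 1)) := by
  obtain ⟨N, hN⟩ := pow_unbounded_of_one_lt C one_lt_two
  refine ⟨N, fun k => ?_⟩
  set m := Nat.log 2 (k + 1)
  have hm : (2 : ℝ) ^ m ≤ (k : ℝ) + 1 := by
    exact_mod_cast Nat.pow_log_le_self 2 (Nat.succ_ne_zero k)
  have hm1 : (k : ℝ) + 1 < 2 ^ (m + 1) := by
    exact_mod_cast Nat.lt_pow_succ_log_self one_lt_two (k + 1)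
  have hx : 1 - 1 / ((k : ℝ) + 1) ≤ 1 - (1 / 2) ^ (m + 1) := by
    rw [div_pow, one_pow]
    gcongr
  have hmono : W (1 - (1 / 2) ^ (m + 1)) ≤ W (1 - 1 / ((k : ℝ) + 1)) :=
    hW (one_sub_inv_succ_mem_Ico k)
      (one_sub_mem_Ico (by positivity) (pow_le_one₀ (by norm_num) (by norm_num))) hx
  have hCm : C ^ (m + 1) ≤ C * ((k : ℝ) + 1) ^ N :=
    calc C ^ (m + 1) = C * C ^ m := pow_succ' C m
      _ ≤ C * ((2 : ℝ) ^ m) ^ N := by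
        rw [← pow_mul, mul_comm m, pow_mul]; gcongr
      _ ≤ C * ((k : ℝ) + 1) ^ N := by gcongr
  calc W 0 ≤ C ^ (m + 1) * W (1 - (1 / 2) ^ (m + 1)) := le_pow_mul_one_sub_half_pow hC0 hD _
    _ ≤ C ^ (m + 1) * W (1 - 1 / ((k : ℝ) + 1)) := by gcongr
    _ ≤ C * ((k : ℝ) + 1) ^ N * W (1 - 1 / ((k : ℝ) + 1)) :=
      mul_le_mul_of_nonneg_right hCm (hpos _ (one_sub_inv_succ_mem_Ico k)).le

end Doubling

noncomputable def tailRatio (α q : ℝ) (W : ℝ → ℝ) (r : ℝ) : ℝ := (1 - r) ^ α / W r ^ q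

section TailRatio

variable {α q : ℝ} {W : ℝ → ℝ}

lemma tailRatio_nonneg {r : ℝ} (hr : r ≤ 1) (hW : 0 ≤ W r) : 0 ≤ tailRatio α q W r :=
  div_nonneg (rpow_nonneg (by linarith) _) (rpow_nonneg hW _)

lemma tailRatio_one_sub_inv_succ (k : ℕ) :
    tailRatio α q W (1 - 1 / ((k : ℝ) + 1)) =
      1 / (W (1 - 1 / ((k : ℝ) + 1)) ^ q * ((k : ℝ) + 1) ^ α) := by
  rw [tailRatio, sub_sub_cancel, one_div, inv_rpow (by positivity), div_eq_mul_inv, ← mul_inv,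
    one_div, mul_comm]

lemma tailRatio_one_sub_inv_succ_nonneg (hpos : ∀ r ∈ Ico (0 : ℝ) 1, 0 < W r) (k : ℕ) :
    0 ≤ tailRatio α q W (1 - 1 / ((k : ℝ) + 1)) :=
  tailRatio_nonneg (one_sub_inv_succ_mem_Ico k).2.le (hpos _ (one_sub_inv_succ_mem_Ico k)).le

lemma tailRatio_le_mul (hα : α ≤ 1) (hq : 0 ≤ q) (hW : AntitoneOn W (Ico 0 1))
    (hpos : ∀ r ∈ Ico (0 : ℝ) 1, 0 < W r) {r x c : ℝ} (hr : 0 ≤ r) (hrx : r ≤ x) (hx : x < 1)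
    (hc : 1 - r ≤ c * (1 - x)) :
    tailRatio α q W r ≤ c * tailRatio α q W x := by
  have hx0 : 0 < 1 - x := by linarith
  have hr0 : 0 < 1 - r := by linarith
  have hsplit : ∀ t : ℝ, 0 < t → t ^ α = t * t ^ (α - 1) := fun t ht => by
    rw [mul_comm, ← rpow_add_one ht.ne', sub_add_cancel]
  have hnum : (1 - r) ^ α ≤ c * (1 - x) ^ α :=
    calc (1 - r) ^ α = (1 - r) * (1 - r) ^ (α - 1) := hsplit _ hr0
      _ ≤ (c * (1 - x)) * (1 - x) ^ (α - 1) :=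
          mul_le_mul hc (rpow_le_rpow_of_nonpos hx0 (by linarith) (by linarith))
            (rpow_nonneg hr0.le _) (by linarith)
      _ = c * (1 - x) ^ α := by rw [mul_assoc, ← hsplit _ hx0]
  have hWx := hpos x ⟨hr.trans hrx, hx⟩
  have hden : W x ^ q ≤ W r ^ q :=
    rpow_le_rpow hWx.le (hW ⟨hr, hrx.trans_lt hx⟩ ⟨hr.trans hrx, hx⟩ hrx) hq
  rw [tailRatio, tailRatio, mul_div_assoc']
  exact div_le_div₀ ((rpow_nonneg hr0.le _).trans hnum) hnum (rpow_pos_of_pos hWx q) hden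

lemma summable_tailRatio_one_sub_inv_succ_mul_pow (hq : 0 ≤ q) (hW : AntitoneOn W (Ico 0 1))
    (hpos : ∀ r ∈ Ico (0 : ℝ) 1, 0 < W r) {C : ℝ} (hC0 : 0 ≤ C)
    (hD : ∀ r ∈ Ico (0 : ℝ) 1, W r ≤ C * W ((1 + r) / 2)) {x : ℝ} (hx0 : 0 ≤ x) (hx1 : x < 1) :
    Summable fun k : ℕ => tailRatio α q W (1 - 1 / ((k : ℝ) + 1)) * x ^ k := by
  obtain ⟨N, hN⟩ := exists_le_mul_pow_mul_one_sub_inv hW hpos hC0 hD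
  have hW0 := hpos 0 ⟨le_rfl, one_pos⟩
  set M := ⌈N * q - α⌉₊
  have hbound : ∀ k : ℕ,
      tailRatio α q W (1 - 1 / ((k : ℝ) + 1)) ≤ (C / W 0) ^ q * ((k : ℝ) + 1) ^ M := by
    intro k
    have hk : (0 : ℝ) < k + 1 := by positivity
    have hWk := hpos _ (one_sub_inv_succ_mem_Ico k)
    have hinv : (W (1 - 1 / ((k : ℝ) + 1)))⁻¹ ≤ C / W 0 * ((k : ℝ) + 1) ^ N := by
      rw [inv_le_iff_one_le_mul₀ hWk, div_mul_eq_mul_div, div_mul_eq_mul_div, le_div_iff₀ hW0]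
      linarith [hN k]
    calc tailRatio α q W (1 - 1 / ((k : ℝ) + 1))
        = (W (1 - 1 / ((k : ℝ) + 1)))⁻¹ ^ q * ((k : ℝ) + 1) ^ (-α) := by
          rw [tailRatio_one_sub_inv_succ, inv_rpow hWk.le, rpow_neg hk.le]; ring
      _ ≤ (C / W 0 * ((k : ℝ) + 1) ^ N) ^ q * ((k : ℝ) + 1) ^ (-α) :=
          mul_le_mul_of_nonneg_right (rpow_le_rpow (inv_nonneg.2 hWk.le) hinv hq) (by positivity)
      _ = (C / W 0) ^ q * ((k : ℝ) + 1) ^ (N * q - α) := by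
          rw [mul_rpow (by positivity) (by positivity), ← rpow_natCast, ← rpow_mul hk.le,
            sub_eq_add_neg, rpow_add hk]
          ring
      _ ≤ (C / W 0) ^ q * ((k : ℝ) + 1) ^ M := by
          rw [← rpow_natCast]
          gcongr
          · linarith [k.cast_nonneg (α := ℝ)]
          · exact Nat.le_ceil _
  refine Summable.of_nonneg_of_le
    (fun k => mul_nonneg (tailRatio_one_sub_inv_succ_nonneg hpos k) (pow_nonneg hx0 k))
    (fun k => ?_) ((summable_succ_pow_mul_geometric M hx0 hx1).mul_left ((C / W 0) ^ q))
  rw [← mul_assoc]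
  exact mul_le_mul_of_nonneg_right (hbound k) (pow_nonneg hx0 k)

lemma tailRatio_le_of_summable (hα : α ≤ 1) (hq : 0 ≤ q) (hW : AntitoneOn W (Ico 0 1))
    (hpos : ∀ r ∈ Ico (0 : ℝ) 1, 0 < W r) {r : ℝ} (hr : 1 / 2 ≤ r) (hr1 : r < 1)
    (hs : Summable fun k : ℕ => tailRatio α q W (1 - 1 / ((k : ℝ) + 1)) * r ^ (2 * k)) :
    tailRatio α q W r ≤
      4 * exp 12 * ((1 - r) * ∑' k : ℕ, tailRatio α q W (1 - 1 / ((k : ℝ) + 1)) * r ^ (2 * k)) := by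
  set n := ⌈(1 - r)⁻¹⌉₊
  have h1r : 0 < 1 - r := by linarith
  have hn1 : 1 ≤ (1 - r) * n :=
    calc 1 = (1 - r) * (1 - r)⁻¹ := (mul_inv_cancel₀ h1r.ne').symm
      _ ≤ (1 - r) * n := mul_le_mul_of_nonneg_left (Nat.le_ceil _) h1r.le
  have hn2 : (1 - r) * n < 3 / 2 := by
    have := mul_lt_mul_of_pos_left (Nat.ceil_lt_add_one (inv_pos.2 h1r).le) h1r
    rw [mul_add, mul_inv_cancel₀ h1r.ne'] at this
    linarith
  have hterm : ∀ k ∈ Finset.Ico n (2 * n), tailRatio α q W r / (4 * exp 12) ≤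
      tailRatio α q W (1 - 1 / ((k : ℝ) + 1)) * r ^ (2 * k) := by
    intro k hkmem
    obtain ⟨hnk, hk2n⟩ := Finset.mem_Ico.mp hkmem
    have hnk' : (n : ℝ) ≤ k := by exact_mod_cast hnk
    have hk2n' : (k : ℝ) + 1 ≤ 2 * n := by exact_mod_cast hk2n
    have hk : (0 : ℝ) < k + 1 := by positivity
    have hx : r ≤ 1 - 1 / ((k : ℝ) + 1) := by
      rw [le_sub_comm, div_le_iff₀ hk]; nlinarith
    have hc : 1 - r ≤ 4 * (1 - (1 - 1 / ((k : ℝ) + 1))) := by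
      rw [sub_sub_cancel, ← mul_div_assoc, le_div_iff₀ hk]; nlinarith
    have hratio := tailRatio_le_mul hα hq hW hpos (by linarith) hx
      (one_sub_inv_succ_mem_Ico k).2 hc
    have hpow : exp (-12) ≤ r ^ (2 * k) :=
      (exp_le_exp.mpr (by push_cast; nlinarith)).trans (exp_neg_two_mul_le_pow hr hr1.le (2 * k))
    calc tailRatio α q W r / (4 * exp 12)
        ≤ 4 * tailRatio α q W (1 - 1 / ((k : ℝ) + 1)) / (4 * exp 12) :=
          div_le_div_of_nonneg_right hratio (by positivity)
      _ = tailRatio α q W (1 - 1 / ((k : ℝ) + 1)) * exp (-12) := by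
          rw [mul_div_mul_left _ _ four_ne_zero, exp_neg, div_eq_mul_inv]
      _ ≤ tailRatio α q W (1 - 1 / ((k : ℝ) + 1)) * r ^ (2 * k) :=
          mul_le_mul_of_nonneg_left hpow (tailRatio_one_sub_inv_succ_nonneg hpos k)
  have hsum : n * (tailRatio α q W r / (4 * exp 12)) ≤
      ∑' k : ℕ, tailRatio α q W (1 - 1 / ((k : ℝ) + 1)) * r ^ (2 * k) :=
    calc n * (tailRatio α q W r / (4 * exp 12))
        = ∑ _k ∈ Finset.Ico n (2 * n), tailRatio α q W r / (4 * exp 12) := by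
          rw [Finset.sum_const, Nat.card_Ico, two_mul, Nat.add_sub_cancel, nsmul_eq_mul]
      _ ≤ ∑ k ∈ Finset.Ico n (2 * n), tailRatio α q W (1 - 1 / ((k : ℝ) + 1)) * r ^ (2 * k) :=
          Finset.sum_le_sum hterm
      _ ≤ _ := hs.sum_le_tsum _ fun k _ =>
          mul_nonneg (tailRatio_one_sub_inv_succ_nonneg hpos k) (pow_nonneg (by linarith) _)
  have hr0 := tailRatio_nonneg (α := α) (q := q) hr1.le (hpos r ⟨by linarith, hr1⟩).le
  calc tailRatio α q W r ≤ 4 * exp 12 * ((1 - r) * n * (tailRatio α q W r / (4 * exp 12))) := by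
        field_simp
        nlinarith
    _ ≤ _ := by rw [mul_assoc (1 - r)]; gcongr

lemma exists_series_le_of_tailRatio_le (hpos : ∀ r ∈ Ico (0 : ℝ) 1, 0 < W r)
    (h : ∃ M, ∀ r ∈ Ico (0 : ℝ) 1, tailRatio α q W r ≤ M) :
    ∃ M, ∀ r ∈ Ico (0 : ℝ) 1,
      (1 - r) * ∑' k : ℕ, tailRatio α q W (1 - 1 / ((k : ℝ) + 1)) * r ^ (2 * k) ≤ M := by
  obtain ⟨M, hM⟩ := h
  exact ⟨M, fun r hr => one_sub_mul_tsum_mul_pow_two_mul_le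
    (fun k => tailRatio_one_sub_inv_succ_nonneg hpos k)
    (fun k => hM _ (one_sub_inv_succ_mem_Ico k)) hr.1 hr.2⟩

lemma exists_tailRatio_le_of_series_le (hα : α ≤ 1) (hq : 0 ≤ q) (hW : AntitoneOn W (Ico 0 1))
    (hpos : ∀ r ∈ Ico (0 : ℝ) 1, 0 < W r) {C : ℝ} (hC0 : 0 ≤ C)
    (hD : ∀ r ∈ Ico (0 : ℝ) 1, W r ≤ C * W ((1 + r) / 2))
    (h : ∃ M, ∀ r ∈ Ico (0 : ℝ) 1,
      (1 - r) * ∑' k : ℕ, tailRatio α q W (1 - 1 / ((k : ℝ) + 1)) * r ^ (2 * k) ≤ M) :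
    ∃ M, ∀ r ∈ Ico (0 : ℝ) 1, tailRatio α q W r ≤ M := by
  obtain ⟨M, hM⟩ := h
  have hlarge : ∀ r, 1 / 2 ≤ r → r < 1 → tailRatio α q W r ≤ 4 * exp 12 * M := by
    intro r hr hr1
    have hs := summable_tailRatio_one_sub_inv_succ_mul_pow (α := α) hq hW hpos hC0 hD
      (sq_nonneg r) (by nlinarith : r ^ 2 < 1)
    simp_rw [← pow_mul] at hs
    exact (tailRatio_le_of_summable hα hq hW hpos hr hr1 hs).trans
      (mul_le_mul_of_nonneg_left (hM r ⟨by linarith, hr1⟩) (by positivity))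
  have hhalf := hlarge (1 / 2) le_rfl (by norm_num)
  have hhalf0 : 0 ≤ tailRatio α q W (1 / 2) :=
    tailRatio_nonneg (by norm_num) (hpos _ ⟨by norm_num, by norm_num⟩).le
  refine ⟨2 * (4 * exp 12 * M), fun r ⟨hr0, hr1⟩ => ?_⟩
  rcases lt_or_ge r (1 / 2) with hr | hr
  · calc tailRatio α q W r ≤ 2 * tailRatio α q W (1 / 2) :=
          tailRatio_le_mul hα hq hW hpos hr0 hr.le (by norm_num) (by linarith)
      _ ≤ 2 * (4 * exp 12 * M) := by gcongr
  · linarith [hlarge r hr hr1]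

end TailRatio

/-- For 0 < p ≤ 1 and ω ∈ D̂: sup_{0≤r<1} (1-r)^{2-1/p}/ω̂(r)^{1/p} < ∞ iff
sup_{0≤r<1} (1-r) Σ_{k≥1} r^{2(k-1)}/(ω̂(1-1/k)^{1/p} k^{2-1/p}) < ∞. -/
theorem stmt_11 (p : ℝ) (hp : 0 < p) (hp1 : p ≤ 1)
    (ω : ℝ → ℝ) (hnn : ∀ r, 0 ≤ ω r)
    (hInt : IntegrableOn ω (Set.Ico (0:ℝ) 1))
    (What : ℝ → ℝ) (hWhat : ∀ r, What r = ∫ s in Set.Ioc r 1, ω s)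
    (hpos : ∀ r ∈ Set.Ico (0:ℝ) 1, 0 < What r)
    (hD : ∃ C ≥ (1:ℝ), ∀ r ∈ Set.Ico (0:ℝ) 1, What r ≤ C * What ((1 + r) / 2)) :
    (∃ M : ℝ, ∀ r ∈ Set.Ico (0:ℝ) 1, (1 - r) ^ (2 - 1/p) / What r ^ (1/p) ≤ M) ↔
    (∃ M : ℝ, ∀ r ∈ Set.Ico (0:ℝ) 1,
      (1 - r) * (∑' k : ℕ, r ^ (2 * k) /
        (What (1 - 1 / ((k : ℝ) + 1)) ^ (1/p) * ((k : ℝ) + 1) ^ (2 - 1/p))) ≤ M) := by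
  obtain ⟨C, hC1, hCD⟩ := hD
  have hW : AntitoneOn What (Ico 0 1) := by
    rw [show What = _ from funext hWhat]
    exact (antitoneOn_setIntegral_Ioc_one hnn hInt).mono Ico_subset_Ici_self
  have hα : 2 - 1 / p ≤ 1 := by linarith [(one_le_div hp).mpr hp1]
  have hq : 0 ≤ 1 / p := by positivity
  have hterm : ∀ (r : ℝ) (k : ℕ), r ^ (2 * k) /
      (What (1 - 1 / ((k : ℝ) + 1)) ^ (1 / p) * ((k : ℝ) + 1) ^ (2 - 1 / p)) =
      tailRatio (2 - 1 / p) (1 / p) What (1 - 1 / ((k : ℝ) + 1)) * r ^ (2 * k) := by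
    intro r k
    rw [tailRatio_one_sub_inv_succ, one_div_mul_eq_div]
  simp only [hterm]
  exact ⟨exists_series_le_of_tailRatio_le hpos,
    exists_tailRatio_le_of_series_le hα hq hW hpos (by linarith) hCD⟩
end

section
/- Let 0 < p < 1 and ω ∈ D̂. Then for each point a in the unit disc with |a| close enough to 1, ∫_{S(a)} ω̂(z)^{1/p} (1-|z|)^{1/p - 2} dA(z) ≤ C (ω(S(a)))^{1/p}, where S(a) is the Carleson square based at a and ω(S(a)) = ∫_{S(a)} ω dA ≍ ω̂(a)(1-|a|). -/
/-!
Since `ω̂` is decreasing, on `S(a)` the integrand is at most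
`ω̂(|a|)^(1/p) (1 - |z|)^(1/p - 2)`, and `1/p - 2 > -1` makes this integrable, of size
`ω̂(|a|)^(1/p) (1 - |a|)^(1/p)` over `S(a)`. Conversely
`ω(S(a)) ≥ |a| ω̂(|a|) (1 - |a|) / 2 ≥ ω̂(|a|) (1 - |a|) / 4` once `|a| ≥ 1/2`.
In polar coordinates both integrals split into a radial integral times the angular width of
`S(a)`, which lies between `(1 - |a|) / 2` and `1 - |a|`.
-/

open MeasureTheory Set

noncomputable section

namespace CarlesonSquare

def polarSector (t c h : ℝ) : Set ℂ :=
  {z : ℂ | t ≤ ‖z‖ ∧ ‖z‖ < 1 ∧ |Complex.arg z - c| ≤ h}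

def arcMeasure (c h : ℝ) : ℝ :=
  volume.real (Ioo (-Real.pi) Real.pi ∩ Icc (c - h) (c + h))

/-- The paper's `ω̂`. -/
def tail (ω : ℝ → ℝ) (r : ℝ) : ℝ :=
  ∫ s in Ioc r 1, ω s

lemma measurableSet_polarSector (t c h : ℝ) : MeasurableSet (polarSector t c h) :=
  (measurableSet_le measurable_const measurable_norm).inter
    ((measurableSet_lt measurable_norm measurable_const).inter
      (measurableSet_le (Complex.measurable_arg.sub measurable_const).abs measurable_const))

lemma polarCoord_symm_mem_polarSector_iff {t c h : ℝ} {x : ℝ × ℝ}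
    (hx : x ∈ polarCoord.target) :
    Complex.polarCoord.symm x ∈ polarSector t c h ↔
      x.1 ∈ Ico t 1 ∧ x.2 ∈ Icc (c - h) (c + h) := by
  rw [polarCoord_target] at hx
  obtain ⟨hr, hθ⟩ := hx
  have hnorm : ‖Complex.polarCoord.symm x‖ = x.1 := by
    rw [Complex.norm_polarCoord_symm, abs_of_pos hr]
  have harg : Complex.arg (Complex.polarCoord.symm x) = x.2 := by
    rw [Complex.polarCoord_symm_apply, Complex.ofReal_cos, Complex.ofReal_sin]
    exact Complex.arg_mul_cos_add_sin_mul_I hr ⟨hθ.1, hθ.2.le⟩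
  simp only [polarSector, mem_ofPred_eq, hnorm, harg, mem_Ico, mem_Icc, abs_le]
  constructor
  · rintro ⟨h1, h2, h3, h4⟩; exact ⟨⟨h1, h2⟩, by linarith, by linarith⟩
  · rintro ⟨⟨h1, h2⟩, h3, h4⟩; exact ⟨h1, h2, by linarith, by linarith⟩

lemma integral_polarSector {t : ℝ} (c h : ℝ) (ht : 0 < t) (f : ℝ → ℝ) :
    ∫ z in polarSector t c h, f ‖z‖ = (∫ r in Ico t 1, r * f r) * arcMeasure c h := by
  rw [← integral_indicator (measurableSet_polarSector t c h),
    ← Complex.integral_comp_polarCoord_symm]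
  have hsplit : ∀ x ∈ polarCoord.target,
      x.1 • (polarSector t c h).indicator (fun z => f ‖z‖) (Complex.polarCoord.symm x)
        = (Ico t 1).indicator (fun r => r * f r) x.1 *
          (Icc (c - h) (c + h)).indicator (fun _ => (1 : ℝ)) x.2 := by
    intro x hx
    have hnorm : ‖Complex.polarCoord.symm x‖ = x.1 := by
      rw [Complex.norm_polarCoord_symm, abs_of_pos ((polarCoord_target ▸ hx).1)]
    by_cases hmem : Complex.polarCoord.symm x ∈ polarSector t c h
    · obtain ⟨hr, hθ⟩ := (polarCoord_symm_mem_polarSector_iff hx).1 hmem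
      rw [indicator_of_mem hmem, indicator_of_mem hr, indicator_of_mem hθ, hnorm, smul_eq_mul,
        mul_one]
    · rw [indicator_of_notMem hmem, smul_zero]
      rw [polarCoord_symm_mem_polarSector_iff hx, not_and_or] at hmem
      rcases hmem with hr | hθ
      · rw [indicator_of_notMem hr, zero_mul]
      · rw [indicator_of_notMem hθ, mul_zero]
  have hIco : Ioi (0 : ℝ) ∩ Ico t 1 = Ico t 1 :=
    inter_eq_self_of_subset_right fun r hr => ht.trans_le hr.1
  rw [setIntegral_congr_fun polarCoord.open_target.measurableSet hsplit, polarCoord_target,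
    Measure.volume_eq_prod, setIntegral_prod_mul, setIntegral_indicator measurableSet_Ico,
    setIntegral_indicator measurableSet_Icc, hIco, setIntegral_const]
  simp [arcMeasure, inter_comm]

lemma arcMeasure_le (c : ℝ) {h : ℝ} (hh : 0 ≤ h) : arcMeasure c h ≤ 2 * h := by
  calc arcMeasure c h ≤ volume.real (Icc (c - h) (c + h)) :=
        measureReal_mono inter_subset_right measure_Icc_lt_top.ne
    _ = 2 * h := by rw [Real.volume_real_Icc_of_le (by linarith)]; ring

/-- The window `[c - h, c + h]` contains an interval of length `h` on one side of `c` inside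
`(-π, π)`. -/
lemma le_arcMeasure {c h : ℝ} (hc : c ∈ Ioc (-Real.pi) Real.pi) (hh : 0 ≤ h)
    (hhπ : h ≤ Real.pi) : h ≤ arcMeasure c h := by
  obtain ⟨x, hx⟩ : ∃ x, Ioo x (x + h) ⊆ Ioo (-Real.pi) Real.pi ∩ Icc (c - h) (c + h) := by
    rcases le_or_gt c (Real.pi - h) with hcπ | hcπ
    · exact ⟨c, fun θ hθ => ⟨⟨by linarith [hc.1, hθ.1], by linarith [hθ.2]⟩,
        by linarith [hθ.1], by linarith [hθ.2]⟩⟩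
    · exact ⟨c - h, fun θ hθ => ⟨⟨by linarith [hθ.1], by linarith [hc.2, hθ.2]⟩,
        by linarith [hθ.1], by linarith [hθ.2]⟩⟩
  calc h = volume.real (Ioo x (x + h)) := by rw [Real.volume_real_Ioo_of_le (by linarith)]; ring
    _ ≤ arcMeasure c h :=
        measureReal_mono hx (measure_ne_top_of_subset inter_subset_left measure_Ioo_lt_top.ne)

lemma tail_nonneg {ω : ℝ → ℝ} (hω : ∀ r, 0 ≤ ω r) (r : ℝ) : 0 ≤ tail ω r :=
  setIntegral_nonneg measurableSet_Ioc fun s _ => hω s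

lemma tail_le_tail {ω : ℝ → ℝ} {t r : ℝ} (hω : ∀ r, 0 ≤ ω r) (hint : IntegrableOn ω (Ioc t 1))
    (htr : t ≤ r) : tail ω r ≤ tail ω t :=
  setIntegral_mono_set hint (ae_of_all _ hω) (Ioc_subset_Ioc_left htr).eventuallyLE

lemma integral_Ico_one_sub_rpow {q t : ℝ} (hq : -1 < q) (ht : t ≤ 1) :
    ∫ r in Ico t 1, (1 - r) ^ q = (1 - t) ^ (q + 1) / (q + 1) := by
  rw [integral_Ico_eq_integral_Ioo, ← integral_Ioc_eq_integral_Ioo,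
    ← intervalIntegral.integral_of_le ht, intervalIntegral.integral_comp_sub_left (· ^ q) 1,
    sub_self, integral_rpow (Or.inl hq), Real.zero_rpow (by linarith), sub_zero]

lemma integrableOn_Ico_one_sub_rpow {q : ℝ} (t : ℝ) (hq : -1 < q) :
    IntegrableOn (fun r : ℝ => (1 - r) ^ q) (Ico t 1) := by
  have hii : IntervalIntegrable (fun r : ℝ => (1 - r) ^ q) volume t 1 := by
    simpa using ((intervalIntegral.intervalIntegrable_rpow' (a := 1 - 1) (b := 1 - t) hq
      ).comp_sub_left 1).symm
  exact ((intervalIntegrable_iff' (μ := volume)).mp hii).mono_set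
    fun r hr => mem_uIcc.mpr (Or.inl ⟨hr.1, hr.2.le⟩)

lemma setIntegral_mul_tail_rpow_le {ω : ℝ → ℝ} {t s q : ℝ} (hω : ∀ r, 0 ≤ ω r)
    (hint : IntegrableOn ω (Ioc t 1)) (ht : 0 ≤ t) (ht1 : t ≤ 1) (hs : 0 ≤ s) (hq : -1 < q) :
    ∫ r in Ico t 1, r * (tail ω r ^ s * (1 - r) ^ q)
      ≤ tail ω t ^ s * ((1 - t) ^ (q + 1) / (q + 1)) := by
  rw [← integral_Ico_one_sub_rpow hq ht1, ← integral_const_mul]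
  refine integral_mono_of_nonneg ?_ ((integrableOn_Ico_one_sub_rpow t hq).const_mul _) ?_
  all_goals
    filter_upwards [ae_restrict_mem measurableSet_Ico] with r hr
    have hr0 : 0 ≤ r := ht.trans hr.1
    have hq0 : 0 ≤ (1 - r) ^ q := Real.rpow_nonneg (by linarith [hr.2]) _
    have hW0 := tail_nonneg hω r
  · positivity
  · calc r * (tail ω r ^ s * (1 - r) ^ q) ≤ 1 * (tail ω t ^ s * (1 - r) ^ q) := by
          gcongr
          · exact hr.2.le
          · exact tail_le_tail hω hint hr.1
      _ = tail ω t ^ s * (1 - r) ^ q := one_mul _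

lemma mul_tail_le_setIntegral {ω : ℝ → ℝ} {t : ℝ} (hω : ∀ r, 0 ≤ ω r)
    (hint : IntegrableOn ω (Ioc t 1)) (ht : 0 ≤ t) :
    t * tail ω t ≤ ∫ r in Ico t 1, r * ω r := by
  have hintIco : IntegrableOn ω (Ico t 1) :=
    (integrableOn_Ico_iff_integrableOn_Ioo).2 ((integrableOn_Ioc_iff_integrableOn_Ioo).1 hint)
  have hrω : IntegrableOn (fun r => r * ω r) (Ico t 1) := by
    refine Integrable.mono hintIco (aestronglyMeasurable_id.mul hintIco.1) ?_
    filter_upwards [ae_restrict_mem measurableSet_Ico] with r hr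
    rw [norm_mul, Real.norm_of_nonneg (ht.trans hr.1)]
    exact mul_le_of_le_one_left (norm_nonneg _) hr.2.le
  rw [tail, integral_Ioc_eq_integral_Ioo, ← integral_Ico_eq_integral_Ioo, ← integral_const_mul]
  exact setIntegral_mono_on (hintIco.const_mul t) hrω measurableSet_Ico
    fun r hr => mul_le_mul_of_nonneg_right hr.1 (hω r)

lemma setIntegral_polarSector_tail_rpow_le {ω : ℝ → ℝ} {t s : ℝ} (c : ℝ) {h : ℝ}
    (hω : ∀ r, 0 ≤ ω r) (hint : IntegrableOn ω (Ioc t 1)) (ht : 0 < t) (ht1 : t ≤ 1)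
    (hh : 0 ≤ h) (hs : 1 < s) :
    ∫ z in polarSector t c h, tail ω ‖z‖ ^ s * (1 - ‖z‖) ^ (s - 2)
      ≤ tail ω t ^ s * ((1 - t) ^ (s - 1) / (s - 1)) * (2 * h) := by
  have hradial := setIntegral_mul_tail_rpow_le hω hint ht.le ht1 (by linarith) (q := s - 2)
    (by linarith)
  rw [show s - 2 + 1 = s - 1 by ring] at hradial
  have hW := tail_nonneg hω t
  have h1t : 0 ≤ (1 - t) ^ (s - 1) := Real.rpow_nonneg (by linarith) _
  have hs1 : 0 < s - 1 := by linarith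
  rw [integral_polarSector c h ht fun r => tail ω r ^ s * (1 - r) ^ (s - 2)]
  exact mul_le_mul hradial (arcMeasure_le c hh) measureReal_nonneg (by positivity)

lemma mul_tail_mul_le_setIntegral_polarSector {ω : ℝ → ℝ} {t c h : ℝ} (hω : ∀ r, 0 ≤ ω r)
    (hint : IntegrableOn ω (Ioc t 1)) (ht : 0 < t) (hc : c ∈ Ioc (-Real.pi) Real.pi)
    (hh : 0 ≤ h) (hhπ : h ≤ Real.pi) :
    t * tail ω t * h ≤ ∫ z in polarSector t c h, ω ‖z‖ := by
  have hradial := mul_tail_le_setIntegral hω hint ht.le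
  have hW := tail_nonneg hω t
  rw [integral_polarSector c h ht]
  exact mul_le_mul hradial (le_arcMeasure hc hh hhπ) hh ((mul_nonneg ht.le hW).trans hradial)

/-- The `(1 - t) / 2`-wide sector at radius `t ≥ 1/2` is comparable in both measures to a
`(1 - t) × (1 - t)` box, which produces the power `s` on both sides. -/
lemma one_div_pi_mul_setIntegral_polarSector_le {ω : ℝ → ℝ} {t c s : ℝ} (hω : ∀ r, 0 ≤ ω r)
    (hint : IntegrableOn ω (Ioc t 1)) (ht2 : 1 / 2 ≤ t) (ht1 : t < 1)
    (hc : c ∈ Ioc (-Real.pi) Real.pi) (hs : 1 < s) :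
    1 / Real.pi * ∫ z in polarSector t c ((1 - t) / 2), tail ω ‖z‖ ^ s * (1 - ‖z‖) ^ (s - 2)
      ≤ (4 * Real.pi) ^ s / (Real.pi * (s - 1)) *
        (1 / Real.pi * ∫ z in polarSector t c ((1 - t) / 2), ω ‖z‖) ^ s := by
  have ht : 0 < t := by linarith
  have hπ := Real.pi_pos
  have hupper := setIntegral_polarSector_tail_rpow_le c hω hint ht ht1.le
    (h := (1 - t) / 2) (by linarith) hs
  have hlower := mul_tail_mul_le_setIntegral_polarSector hω hint ht hc (h := (1 - t) / 2)
    (by linarith) (by linarith [Real.pi_gt_three])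
  set W := tail ω t
  have hW : 0 ≤ W := tail_nonneg hω t
  have h1t : 0 < 1 - t := by linarith
  calc 1 / Real.pi * ∫ z in polarSector t c ((1 - t) / 2),
        tail ω ‖z‖ ^ s * (1 - ‖z‖) ^ (s - 2)
      ≤ 1 / Real.pi * (W ^ s * ((1 - t) ^ (s - 1) / (s - 1)) * (2 * ((1 - t) / 2))) := by
        gcongr
    _ = (4 * Real.pi) ^ s / (Real.pi * (s - 1)) * (W * (1 - t) / (4 * Real.pi)) ^ s := by
        rw [Real.div_rpow (by positivity) (by positivity), Real.mul_rpow hW h1t.le,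
          Real.rpow_sub_one h1t.ne']
        field_simp
    _ ≤ (4 * Real.pi) ^ s / (Real.pi * (s - 1)) *
          (1 / Real.pi * ∫ z in polarSector t c ((1 - t) / 2), ω ‖z‖) ^ s := by
        have hmono : W * (1 - t) / 4 ≤ t * W * ((1 - t) / 2) := by
          nlinarith [mul_nonneg (mul_nonneg hW h1t.le) (by linarith : (0 : ℝ) ≤ 2 * t - 1)]
        gcongr
        rw [show W * (1 - t) / (4 * Real.pi) = 1 / Real.pi * (W * (1 - t) / 4) by ring]
        gcongr
        exact hmono.trans hlower

end CarlesonSquare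

end

theorem stmt_14_general (p : ℝ) (hp : 0 < p) (hp1 : p < 1)
    (ω : ℝ → ℝ) (hnn : ∀ r, 0 ≤ ω r)
    (hInt : IntegrableOn ω (Set.Ico (0:ℝ) 1))
    (What : ℝ → ℝ) (hWhat : ∀ r, What r = ∫ s in Set.Ioc r 1, ω s)
    (S : ℂ → Set ℂ)
    (hS : ∀ a : ℂ, S a = {z : ℂ | ‖a‖ ≤ ‖z‖ ∧ ‖z‖ < 1 ∧
      |Complex.arg z - Complex.arg a| ≤ (1 - ‖a‖) / 2}) :
    ∃ C > (0:ℝ), ∃ r₀ ∈ Set.Ico (0:ℝ) 1, ∀ a : ℂ, a ≠ 0 → r₀ ≤ ‖a‖ → ‖a‖ < 1 →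
      (1 / Real.pi) * (∫ z in S a, What ‖z‖ ^ (1/p) * (1 - ‖z‖) ^ (1/p - 2)) ≤
        C * ((1 / Real.pi) * ∫ z in S a, ω ‖z‖) ^ (1/p) := by
  obtain rfl : What = CarlesonSquare.tail ω := funext hWhat
  have hs : 1 < 1 / p := one_lt_one_div hp hp1
  have hπ := Real.pi_pos
  refine ⟨(4 * Real.pi) ^ (1 / p) / (Real.pi * (1 / p - 1)), by bound, 1 / 2, by norm_num, ?_⟩
  intro a _ ht2 ht1
  have hint : IntegrableOn ω (Ioc ‖a‖ 1) := (integrableOn_Ioc_iff_integrableOn_Ioo).2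
    (hInt.mono_set (Ioo_subset_Ico_self.trans (Ico_subset_Ico_left (norm_nonneg a))))
  rw [hS a]
  exact CarlesonSquare.one_div_pi_mul_setIntegral_polarSector_le hnn hint ht2 ht1
    (Complex.arg_mem_Ioc a) hs

/-- For 0 < p < 1 and ω ∈ D̂, for |a| close enough to 1,
∫_{S(a)} ω̂(z)^{1/p}(1-|z|)^{1/p-2} dA(z) ≤ C (ω(S(a)))^{1/p}, where S(a) is the
Carleson square at a and dA is the normalized area measure. -/
theorem stmt_14 (p : ℝ) (hp : 0 < p) (hp1 : p < 1)
    (ω : ℝ → ℝ) (hnn : ∀ r, 0 ≤ ω r)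
    (hInt : IntegrableOn ω (Set.Ico (0:ℝ) 1))
    (What : ℝ → ℝ) (hWhat : ∀ r, What r = ∫ s in Set.Ioc r 1, ω s)
    (hpos : ∀ r ∈ Set.Ico (0:ℝ) 1, 0 < What r)
    (hD : ∃ C ≥ (1:ℝ), ∀ r ∈ Set.Ico (0:ℝ) 1, What r ≤ C * What ((1 + r) / 2))
    (S : ℂ → Set ℂ)
    (hS : ∀ a : ℂ, S a = {z : ℂ | ‖a‖ ≤ ‖z‖ ∧ ‖z‖ < 1 ∧
      |Complex.arg z - Complex.arg a| ≤ (1 - ‖a‖) / 2}) :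
    ∃ C > (0:ℝ), ∃ r₀ ∈ Set.Ico (0:ℝ) 1, ∀ a : ℂ, a ≠ 0 → r₀ ≤ ‖a‖ → ‖a‖ < 1 →
      (1 / Real.pi) * (∫ z in S a, What ‖z‖ ^ (1/p) * (1 - ‖z‖) ^ (1/p - 2)) ≤
        C * ((1 / Real.pi) * ∫ z in S a, ω ‖z‖) ^ (1/p) :=
  stmt_14_general p hp hp1 ω hnn hInt What hWhat S hS
end
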